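/- arXiv:1806.03680 — 10 statements merged into one kernel-verified Lean document; each statement's English description precedes it below -/
import Mathlib

section
/- Let (Ω, F, P, θ) be a measure-preserving dynamical system with θ: ℝ × Ω → Ω a group of measurable maps preserving P. Let Φ be a random dynamical system over θ on a separable Banach space X with a random periodic path Y of period τ > 0, and let μ_s be the periodic measure on Ω × X defined by (μ_s)_ω = δ_{Y(s, θ_{-s}ω)}. If the discrete metric dynamical system (Ω, F, P, θ_τ) is ergodic, then for each s ∈ ℝ the skew-product system (Ω × X, F ⊗ B(X), μ_s, Θ̄_τ) is ergodic, where Θ̄_t(ω, x) = (θ_t ω, Φ(t, ω)x). -/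
open MeasureTheory

/-- If the discrete noise system $(Ω, F, P, θ_τ)$ is ergodic, then for each $s$ the
skew-product system $(Ω × X, μ_s, Θ̄_τ)$ generated by a random periodic path is ergodic. -/
theorem skew_product_ergodic_of_base_ergodic
    {Ω : Type*} [MeasurableSpace Ω] {X : Type*} [NormedAddCommGroup X]
    [NormedSpace ℝ X] [CompleteSpace X] [SecondCountableTopology X]
    [MeasurableSpace X] [BorelSpace X]
    (P : Measure Ω) [IsProbabilityMeasure P]
    (θ : ℝ → Ω → Ω)
    (hθmeas : ∀ t, Measurable (θ t))
    (hθgrp : ∀ t s ω, θ t (θ s ω) = θ (t + s) ω)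
    (hθ0 : ∀ ω, θ 0 ω = ω)
    (hθinv : ∀ t, MeasurePreserving (θ t) P P)
    (Φ : ℝ → Ω → X → X)
    (hΦmeas : ∀ t, Measurable fun p : Ω × X => Φ t p.1 p.2)
    (hΦ0 : ∀ᵐ ω ∂P, ∀ x, Φ 0 ω x = x)
    (hΦcoc : ∀ t s, 0 ≤ t → 0 ≤ s → ∀ᵐ ω ∂P, ∀ x,
      Φ (t + s) ω x = Φ t (θ s ω) (Φ s ω x))
    (Y : ℝ → Ω → X)
    (hYmeas : ∀ s, Measurable (Y s))
    (τ : ℝ) (hτ : 0 < τ)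
    (hYper : ∀ t s, 0 ≤ t → ∀ᵐ ω ∂P, Φ t (θ s ω) (Y s ω) = Y (t + s) ω)
    (hYτ : ∀ s, ∀ᵐ ω ∂P, Y (s + τ) ω = Y s (θ τ ω))
    (μ : ℝ → Measure (Ω × X))
    (hμ : ∀ s, μ s = Measure.map (fun ω => (ω, Y s (θ (-s) ω))) P)
    (herg : ∀ A : Set Ω, MeasurableSet A → θ τ ⁻¹' A = A → P A = 0 ∨ P A = 1)
    (s : ℝ) :
    ∀ A : Set (Ω × X), MeasurableSet A →
      (fun p : Ω × X => (θ τ p.1, Φ τ p.1 p.2)) ⁻¹' A = A →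
      μ s A = 0 ∨ μ s A = 1 := by
  intro A hA hAinv
  -- the map defining μ s
  set g : Ω → Ω × X := fun ω => (ω, Y s (θ (-s) ω)) with hg
  have hgmeas : Measurable g := measurable_id.prodMk ((hYmeas s).comp (hθmeas (-s)))
  set B : Set Ω := g ⁻¹' A with hB
  have hBmeas : MeasurableSet B := hgmeas hA
  have hμA : μ s A = P B := by
    rw [hμ s, Measure.map_apply hgmeas hA]
  -- pointwise invariance of A
  have hApt : ∀ ω x, (θ τ ω, Φ τ ω x) ∈ A ↔ (ω, x) ∈ A := by
    intro ω x
    constructor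
    · intro h
      have := congrArg (fun S => (ω, x) ∈ S) hAinv
      simpa using this.mp (by simpa using h)
    · intro h
      have := congrArg (fun S => (ω, x) ∈ S) hAinv
      simpa using this.mpr h
  -- key a.e. identity : Φ τ ω (Y s (θ (-s) ω)) = Y s (θ (-s) (θ τ ω))
  have h1 : ∀ᵐ ω ∂P, Φ τ (θ s (θ (-s) ω)) (Y s (θ (-s) ω)) = Y (τ + s) (θ (-s) ω) :=
    (hθinv (-s)).quasiMeasurePreserving.tendsto_ae.eventually (hYper τ s hτ.le)
  have h2 : ∀ᵐ ω ∂P, Y (s + τ) (θ (-s) ω) = Y s (θ τ (θ (-s) ω)) :=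
    (hθinv (-s)).quasiMeasurePreserving.tendsto_ae.eventually (hYτ s)
  have hkey : ∀ᵐ ω ∂P, Φ τ ω (Y s (θ (-s) ω)) = Y s (θ (-s) (θ τ ω)) := by
    filter_upwards [h1, h2] with ω e1 e2
    have hss : θ s (θ (-s) ω) = ω := by rw [hθgrp]; simp [hθ0]
    have hcomm : θ τ (θ (-s) ω) = θ (-s) (θ τ ω) := by
      rw [hθgrp, hθgrp, add_comm]
    rw [hss] at e1
    rw [e1, show τ + s = s + τ from add_comm τ s, e2, hcomm]
  -- B is a.e. invariant under θ τ
  have hBinv : θ τ ⁻¹' B =ᵐ[P] B := by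
    rw [Filter.eventuallyEq_set]
    filter_upwards [hkey] with ω e
    have : (θ τ ω, Y s (θ (-s) (θ τ ω))) ∈ A ↔ (ω, Y s (θ (-s) ω)) ∈ A := by
      rw [← e]; exact hApt ω _
    simpa [B, g, Set.mem_preimage] using this
  -- ergodicity of the base
  have hergB : Ergodic (θ τ) P := by
    refine ⟨hθinv τ, ⟨fun C hC hCinv => ?_⟩⟩
    rw [Filter.eventuallyConst_set']
    rcases herg C hC hCinv with h | h
    · exact Or.inl (ae_eq_empty.mpr h)
    · refine Or.inr (ae_eq_univ.mpr ?_)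
      have : P Cᶜ = 1 - P C := by
        rw [measure_compl hC (measure_ne_top P C)]; simp
      rw [this, h]; simp
  rcases hergB.quasiErgodic.ae_empty_or_univ₀ hBmeas.nullMeasurableSet hBinv with h | h
  · left; rw [hμA]; exact ae_eq_empty.mp h
  · right; rw [hμA]
    have : P Bᶜ = 0 := by
      have := ae_eq_univ.mp h
      exact this
    have := measure_compl hBmeas (measure_ne_top P B)
    rw [‹P Bᶜ = 0›] at this
    have hPB : P B ≤ 1 := prob_le_one
    simpa [measure_univ] using (by
      have : (1 : ENNReal) - P B = 0 := by simpa [measure_univ] using this.symm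
      exact ((tsub_eq_zero_iff_le.mp this).antisymm hPB).symm)
end

section
/- Under the same setting, if the discrete metric dynamical system (Ω, F, P, θ_τ) is ergodic, then the continuous-time skew-product system (Ω × X, F ⊗ B(X), μ̄, (Θ̄_t)_{t≥0}) is ergodic, where μ̄ = (1/τ)∫_0^τ μ_s ds. -/
/-! An invariant set `A` of the skew product is cut, at time `s`, into the fiber set
`{ω | (θ_s ω, Y(s, ω)) ∈ A}`, whose probability is `μ_s(A)`. Invariance of `A` together with the
periodicity of `Y` makes the fiber sets a.e. independent of `s`, so `μ̄(A)` is the probability of a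
single fiber set, and that set is a.e. `θ_τ`-invariant because `Y(s + τ) = Y(s) ∘ θ_τ`. Ergodicity
of `θ_τ` then forces its probability to be `0` or `1`. -/

open MeasureTheory Filter

theorem PreErgodic.of_prob_eq_zero_or_one {α : Type*} [MeasurableSpace α] {f : α → α}
    {μ : Measure α} [IsProbabilityMeasure μ]
    (h : ∀ s, MeasurableSet s → f ⁻¹' s = s → μ s = 0 ∨ μ s = 1) : PreErgodic f μ where
  aeconst_set s hs hfs := eventuallyConst_set'.mpr <| (h s hs hfs).imp ae_eq_empty.mpr
    fun h1 => ae_eq_univ.mpr <| (prob_compl_eq_zero_iff hs).mpr h1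

theorem MeasureTheory.MeasurePreserving.map_comp_eq {α β : Type*} [MeasurableSpace α]
    [MeasurableSpace β] {μ : Measure α} {e : α → α} (he : MeasurePreserving e μ μ) {g : α → β}
    (hg : Measurable g) :
    μ.map (g ∘ e) = μ.map g := by
  rw [← Measure.map_map hg he.measurable, he.map_eq]

theorem setLIntegral_Ioc_div_eq_of_eqOn {f : ℝ → ENNReal} {c : ENNReal} {τ : ℝ} (hτ : 0 < τ)
    (hf : Set.EqOn f (fun _ => c) (Set.Ioc 0 τ)) :
    (∫⁻ t in Set.Ioc 0 τ, f t) / ENNReal.ofReal τ = c := by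
  rw [setLIntegral_congr_fun measurableSet_Ioc hf, setLIntegral_const, Real.volume_Ioc, sub_zero,
    mul_div_assoc, ENNReal.div_self (by simpa using hτ) ENNReal.ofReal_ne_top, mul_one]

section FiberSet

variable {Ω X : Type*} [MeasurableSpace Ω] {P : Measure Ω}
  {θ : ℝ → Ω → Ω} {Y : ℝ → Ω → X} {A : Set (Ω × X)}

def fiberSet (θ : ℝ → Ω → Ω) (Y : ℝ → Ω → X) (A : Set (Ω × X)) (s : ℝ) : Set Ω :=
  (fun ω => (θ s ω, Y s ω)) ⁻¹' A

theorem measurableSet_fiberSet [MeasurableSpace X] {s : ℝ} (hθ : Measurable (θ s))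
    (hY : Measurable (Y s)) (hA : MeasurableSet A) : MeasurableSet (fiberSet θ Y A s) :=
  hθ.prodMk hY hA

theorem map_graph_apply_eq_measure_fiberSet [MeasurableSpace X]
    (hθgrp : ∀ t s ω, θ t (θ s ω) = θ (t + s) ω)
    (hθ0 : ∀ ω, θ 0 ω = ω) (hθinv : ∀ t, MeasurePreserving (θ t) P P)
    (hYmeas : ∀ s, Measurable (Y s)) (s : ℝ) (hA : MeasurableSet A) :
    P.map (fun ω => (ω, Y s (θ (-s) ω))) A = P (fiberSet θ Y A s) := by
  have hgraph : Measurable fun ω => (ω, Y s (θ (-s) ω)) :=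
    measurable_id.prodMk ((hYmeas s).comp (hθinv (-s)).measurable)
  have hcomp : (fun ω => (ω, Y s (θ (-s) ω))) ∘ θ s = fun ω => (θ s ω, Y s ω) := by
    ext ω <;> simp [hθgrp, hθ0]
  rw [← (hθinv s).map_comp_eq hgraph, hcomp,
    Measure.map_apply ((hθinv s).measurable.prodMk (hYmeas s)) hA]
  rfl

theorem fiberSet_ae_eq_add {Φ : ℝ → Ω → X → X} (hθgrp : ∀ t s ω, θ t (θ s ω) = θ (t + s) ω)
    (hYper : ∀ t s, 0 ≤ t → ∀ᵐ ω ∂P, Φ t (θ s ω) (Y s ω) = Y (t + s) ω)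
    (hinv : ∀ t : ℝ, 0 ≤ t → (fun p : Ω × X => (θ t p.1, Φ t p.1 p.2)) ⁻¹' A = A)
    (t : ℝ) (ht : 0 ≤ t) (s : ℝ) : fiberSet θ Y A s =ᵐ[P] fiberSet θ Y A (t + s) := by
  rw [eventuallyEq_set]
  filter_upwards [hYper t s ht] with ω hω
  change (θ s ω, Y s ω) ∈ A ↔ (θ (t + s) ω, Y (t + s) ω) ∈ A
  conv_lhs => rw [← hinv t ht]
  simp only [Set.mem_preimage, hθgrp, hω]

theorem preimage_fiberSet_ae_eq (hθgrp : ∀ t s ω, θ t (θ s ω) = θ (t + s) ω) {τ : ℝ}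
    (hYτ : ∀ s, ∀ᵐ ω ∂P, Y (s + τ) ω = Y s (θ τ ω)) (s : ℝ) :
    θ τ ⁻¹' fiberSet θ Y A s =ᵐ[P] fiberSet θ Y A (s + τ) := by
  rw [eventuallyEq_set]
  filter_upwards [hYτ s] with ω hω
  simp only [fiberSet, Set.mem_preimage, hθgrp, hω]

end FiberSet

theorem averaged_skew_product_ergodic_of_base_ergodic_general
    {Ω : Type*} [MeasurableSpace Ω] {X : Type*}
    [MeasurableSpace X]
    (P : Measure Ω) [IsProbabilityMeasure P]
    (θ : ℝ → Ω → Ω)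
    (hθgrp : ∀ t s ω, θ t (θ s ω) = θ (t + s) ω)
    (hθ0 : ∀ ω, θ 0 ω = ω)
    (hθinv : ∀ t, MeasurePreserving (θ t) P P)
    (Φ : ℝ → Ω → X → X)
    (Y : ℝ → Ω → X)
    (hYmeas : ∀ s, Measurable (Y s))
    (τ : ℝ) (hτ : 0 < τ)
    (hYper : ∀ t s, 0 ≤ t → ∀ᵐ ω ∂P, Φ t (θ s ω) (Y s ω) = Y (t + s) ω)
    (hYτ : ∀ s, ∀ᵐ ω ∂P, Y (s + τ) ω = Y s (θ τ ω))
    (μ : ℝ → Measure (Ω × X))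
    (hμ : ∀ s, μ s = Measure.map (fun ω => (ω, Y s (θ (-s) ω))) P)
    (μbar : Measure (Ω × X))
    (hμbar : ∀ A : Set (Ω × X), MeasurableSet A →
      μbar A = (∫⁻ t in Set.Ioc (0 : ℝ) τ, μ t A) / ENNReal.ofReal τ)
    (herg : ∀ A : Set Ω, MeasurableSet A → θ τ ⁻¹' A = A → P A = 0 ∨ P A = 1) :
    ∀ A : Set (Ω × X), MeasurableSet A →
      (∀ t : ℝ, 0 ≤ t → (fun p : Ω × X => (θ t p.1, Φ t p.1 p.2)) ⁻¹' A = A) →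
      μbar A = 0 ∨ μbar A = 1 := by
  intro A hA hinv
  have hshift := fiberSet_ae_eq_add (P := P) hθgrp hYper hinv
  have hμbarA : μbar A = P (fiberSet θ Y A τ) := by
    refine (hμbar A hA).trans (setLIntegral_Ioc_div_eq_of_eqOn hτ fun t ht => ?_)
    rw [hμ, map_graph_apply_eq_measure_fiberSet hθgrp hθ0 hθinv hYmeas t hA,
      measure_congr (hshift _ (sub_nonneg.mpr ht.2) t), sub_add_cancel]
  have hErg : Ergodic (θ τ) P := ⟨hθinv τ, .of_prob_eq_zero_or_one herg⟩
  have hInvτ : θ τ ⁻¹' fiberSet θ Y A τ =ᵐ[P] fiberSet θ Y A τ :=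
    (preimage_fiberSet_ae_eq hθgrp hYτ τ).trans (hshift τ hτ.le τ).symm
  rw [hμbarA]
  refine (hErg.quasiErgodic.ae_empty_or_univ₀ ?_ hInvτ).imp (fun h => ?_) fun h => ?_
  · exact (measurableSet_fiberSet (hθinv τ).measurable (hYmeas τ) hA).nullMeasurableSet
  · rw [measure_congr h, measure_empty]
  · rw [measure_congr h, measure_univ]

/-- If the discrete noise system $(Ω, F, P, θ_τ)$ is ergodic, then the continuous-time
skew-product system $(Ω × X, μ̄, (Θ̄_t)_{t ≥ 0})$ with $μ̄ = τ^{-1}∫_0^τ μ_s\,ds$ is ergodic. -/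
theorem averaged_skew_product_ergodic_of_base_ergodic
    {Ω : Type*} [MeasurableSpace Ω] {X : Type*} [NormedAddCommGroup X]
    [NormedSpace ℝ X] [CompleteSpace X] [SecondCountableTopology X]
    [MeasurableSpace X] [BorelSpace X]
    (P : Measure Ω) [IsProbabilityMeasure P]
    (θ : ℝ → Ω → Ω)
    (hθmeas : ∀ t, Measurable (θ t))
    (hθgrp : ∀ t s ω, θ t (θ s ω) = θ (t + s) ω)
    (hθ0 : ∀ ω, θ 0 ω = ω)
    (hθinv : ∀ t, MeasurePreserving (θ t) P P)
    (Φ : ℝ → Ω → X → X)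
    (hΦmeas : ∀ t, Measurable fun p : Ω × X => Φ t p.1 p.2)
    (hΦ0 : ∀ᵐ ω ∂P, ∀ x, Φ 0 ω x = x)
    (hΦcoc : ∀ t s, 0 ≤ t → 0 ≤ s → ∀ᵐ ω ∂P, ∀ x,
      Φ (t + s) ω x = Φ t (θ s ω) (Φ s ω x))
    (Y : ℝ → Ω → X)
    (hYmeas : ∀ s, Measurable (Y s))
    (τ : ℝ) (hτ : 0 < τ)
    (hYper : ∀ t s, 0 ≤ t → ∀ᵐ ω ∂P, Φ t (θ s ω) (Y s ω) = Y (t + s) ω)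
    (hYτ : ∀ s, ∀ᵐ ω ∂P, Y (s + τ) ω = Y s (θ τ ω))
    (μ : ℝ → Measure (Ω × X))
    (hμ : ∀ s, μ s = Measure.map (fun ω => (ω, Y s (θ (-s) ω))) P)
    (μbar : Measure (Ω × X))
    (hμbar : ∀ A : Set (Ω × X), MeasurableSet A →
      μbar A = (∫⁻ t in Set.Ioc (0 : ℝ) τ, μ t A) / ENNReal.ofReal τ)
    (herg : ∀ A : Set Ω, MeasurableSet A → θ τ ⁻¹' A = A → P A = 0 ∨ P A = 1) :
    ∀ A : Set (Ω × X), MeasurableSet A →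
      (∀ t : ℝ, 0 ≤ t → (fun p : Ω × X => (θ t p.1, Φ t p.1 p.2)) ⁻¹' A = A) →
      μbar A = 0 ∨ μbar A = 1 :=
  averaged_skew_product_ergodic_of_base_ergodic_general P θ hθgrp hθ0 hθinv Φ Y hYmeas τ hτ hYper
    hYτ μ hμ μbar hμbar herg
end

section
/- For any invariant set A of the continuous-time skew product, i.e., A ∈ F ⊗ B(X) with Θ̄_t^{-1}A = A for all t ≥ 0, the value μ_s(A) is independent of s ∈ ℝ; in particular μ_s(A) = μ_0(A) for all s. -/
open MeasureTheory

/-- For any set invariant under the continuous-time skew product, the value $μ_s(A)$ does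
not depend on $s$; in particular $μ_s(A) = μ_0(A)$. -/
theorem periodic_measure_of_flow_invariant_set_constant
    {Ω : Type*} [MeasurableSpace Ω] {X : Type*} [NormedAddCommGroup X]
    [NormedSpace ℝ X] [CompleteSpace X] [SecondCountableTopology X]
    [MeasurableSpace X] [BorelSpace X]
    (P : Measure Ω) [IsProbabilityMeasure P]
    (θ : ℝ → Ω → Ω)
    (hθmeas : ∀ t, Measurable (θ t))
    (hθgrp : ∀ t s ω, θ t (θ s ω) = θ (t + s) ω)
    (hθ0 : ∀ ω, θ 0 ω = ω)
    (hθinv : ∀ t, MeasurePreserving (θ t) P P)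
    (Φ : ℝ → Ω → X → X)
    (hΦmeas : ∀ t, Measurable fun p : Ω × X => Φ t p.1 p.2)
    (hΦ0 : ∀ᵐ ω ∂P, ∀ x, Φ 0 ω x = x)
    (hΦcoc : ∀ t s, 0 ≤ t → 0 ≤ s → ∀ᵐ ω ∂P, ∀ x,
      Φ (t + s) ω x = Φ t (θ s ω) (Φ s ω x))
    (Y : ℝ → Ω → X)
    (hYmeas : ∀ s, Measurable (Y s))
    (τ : ℝ) (hτ : 0 < τ)
    (hYper : ∀ t s, 0 ≤ t → ∀ᵐ ω ∂P, Φ t (θ s ω) (Y s ω) = Y (t + s) ω)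
    (hYτ : ∀ s, ∀ᵐ ω ∂P, Y (s + τ) ω = Y s (θ τ ω))
    (μ : ℝ → Measure (Ω × X))
    (hμ : ∀ s, μ s = Measure.map (fun ω => (ω, Y s (θ (-s) ω))) P)
    (A : Set (Ω × X)) (hA : MeasurableSet A)
    (hinv : ∀ t : ℝ, 0 ≤ t → (fun p : Ω × X => (θ t p.1, Φ t p.1 p.2)) ⁻¹' A = A) :
    ∀ s : ℝ, μ s A = μ 0 A := by
  have hmap : ∀ s : ℝ, Measurable fun ω => (ω, Y s (θ (-s) ω)) := fun s =>
    measurable_id.prodMk ((hYmeas s).comp (hθmeas (-s)))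
  have hμA : ∀ s, μ s A = P ((fun ω => (ω, Y s (θ (-s) ω))) ⁻¹' A) := fun s => by
    rw [hμ s, Measure.map_apply (hmap s) hA]
  have key : ∀ s t : ℝ, 0 ≤ t →
      P ((fun ω => (ω, Y (s + t) (θ (-(s + t)) ω))) ⁻¹' A)
      = P ((fun ω => (ω, Y s (θ (-s) ω))) ⁻¹' A) := by
    intro s t ht
    have hper : ∀ᵐ ω ∂P,
        Φ t (θ s (θ (-(s+t)) ω)) (Y s (θ (-(s+t)) ω)) = Y (t + s) (θ (-(s+t)) ω) :=
      (hθinv (-(s+t))).quasiMeasurePreserving.ae (hYper t s ht)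
    have heqset : ((fun ω => (ω, Y (s + t) (θ (-(s + t)) ω))) ⁻¹' A)
        =ᵐ[P] (θ (-t)) ⁻¹' ((fun ω => (ω, Y s (θ (-s) ω))) ⁻¹' A) := by
      filter_upwards [hper] with ω hω
      have h1 : θ s (θ (-(s+t)) ω) = θ (-t) ω := by rw [hθgrp]; ring_nf
      have h2 : θ (-s) (θ (-t) ω) = θ (-(s+t)) ω := by rw [hθgrp]; ring_nf
      have h3 : Y (s + t) (θ (-(s + t)) ω)
          = Φ t (θ (-t) ω) (Y s (θ (-(s+t)) ω)) := by
        rw [← h1, hω, add_comm t s]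
      have h4 : ∀ p : Ω × X, p ∈ A ↔ (θ t p.1, Φ t p.1 p.2) ∈ A := by
        intro p
        conv_lhs => rw [← hinv t ht]
        exact Iff.rfl
      show ((ω, Y (s + t) (θ (-(s + t)) ω)) ∈ A)
          = ((θ (-t) ω, Y s (θ (-s) (θ (-t) ω))) ∈ A)
      rw [h2]
      have h5 : ((θ (-t) ω, Y s (θ (-(s+t)) ω)) ∈ A)
          ↔ (θ t (θ (-t) ω), Φ t (θ (-t) ω) (Y s (θ (-(s+t)) ω))) ∈ A :=
        h4 _
      have h6 : θ t (θ (-t) ω) = ω := by rw [hθgrp]; simp [hθ0]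
      rw [h6, ← h3] at h5
      exact propext h5.symm
    rw [measure_congr heqset]
    exact (hθinv (-t)).measure_preimage ((hmap s hA).nullMeasurableSet)
  intro s
  rcases le_or_gt 0 s with hs | hs
  · have h := key 0 s hs
    rw [zero_add] at h
    rw [hμA s, hμA 0, h]
  · have h := key s (-s) (by linarith)
    rw [add_neg_cancel] at h
    rw [hμA s, hμA 0, ← h]
end

section
/- Let (Ω, F, ℙ, (θ_t)_{t∈ℝ}) be the two-sided canonical Wiener metric dynamical system on Ω = C_0(ℝ, ℝ^m). For fixed τ > 0, every θ_τ-invariant set A ∈ I_τ agrees modulo ℙ-null sets with a set in the remote-future tail σ-algebra T^∞ = ⋂_{t∈ℝ} F_t^∞, i.e., I_τ ⊆ T^∞ mod ℙ. Symmetrically, I_τ ⊆ T_{-∞} mod ℙ where T_{-∞} = ⋂_t F_{-∞}^t. -/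
open MeasureTheory

noncomputable section

/-- Two-sided canonical Wiener path space `C_0(ℝ, ℝ^m)`. -/
def WienerPath2 (m : ℕ) : Type := {f : C(ℝ, Fin m → ℝ) // f 0 = 0}

instance (m : ℕ) : TopologicalSpace (WienerPath2 m) :=
  instTopologicalSpaceSubtype

instance (m : ℕ) : MeasurableSpace (WienerPath2 m) := borel _

/-- The two-sided Wiener shift `θ_t ω (s) = ω(t+s) - ω(t)`. -/
def wienerShift2 (m : ℕ) (t : ℝ) (ω : WienerPath2 m) : WienerPath2 m :=
  ⟨⟨fun s => ω.1 (t + s) - ω.1 t,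
    (ω.1.continuous.comp (continuous_const.add continuous_id)).sub continuous_const⟩,
    by simp⟩

/-- σ-algebra generated by the increments `W_u - W_v`, `u, v ∈ S`. -/
def incSigma2 (m : ℕ) (S : Set ℝ) : MeasurableSpace (WienerPath2 m) :=
  ⨆ u ∈ S, ⨆ v ∈ S,
    MeasurableSpace.comap (fun ω : WienerPath2 m => ω.1 u - ω.1 v) inferInstance

instance (m : ℕ) : BorelSpace (WienerPath2 m) := ⟨rfl⟩

/-!
An invariant set `A` is measurable for the σ-algebra of all increments, so it is `ε`-close to a
set `C` determined by the increments on a window `[-N, N]`. Since `θ_{nτ}` preserves `ℙ` and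
fixes `A`, the set `θ_{nτ}⁻¹ C`, determined by the increments on `[nτ - N, nτ + N]`, is just as
close to `A`; letting `n → ±∞`, `A` is approximated arbitrarily well inside `F_t^∞` (resp.
`F_{-∞}^t`) for every `t`. Approximations with summable errors have a `limsup` that lies in the
tail σ-algebra and, by Borel–Cantelli, differs from `A` by a null set.
-/

open Filter
open scoped symmDiff

namespace MeasureTheory

variable {Ω : Type*}

theorem exists_measurableSet_measure_symmDiff_lt_of_measurableSet_iSup [m0 : MeasurableSpace Ω]
    (μ : Measure Ω) [IsFiniteMeasure μ] {M : ℕ → MeasurableSpace Ω} (hM : Monotone M)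
    (hle : ∀ n, M n ≤ m0) {A : Set Ω} (hA : MeasurableSet[⨆ n, M n] A) {ε : ℝ} (hε : 0 < ε) :
    ∃ n, ∃ C, MeasurableSet[M n] C ∧ μ (A ∆ C) < ENNReal.ofReal ε := by
  set 𝒜 : Set (Set Ω) := {s | ∃ n, MeasurableSet[M n] s}
  have h𝒜 : IsSetAlgebra 𝒜 := by
    refine ⟨⟨0, @MeasurableSet.empty _ (M 0)⟩, fun s ⟨n, hs⟩ => ⟨n, hs.compl⟩, ?_⟩
    rintro s t ⟨n, hs⟩ ⟨n', ht⟩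
    exact ⟨max n n', (hM (le_max_left n n') _ hs).union (hM (le_max_right n n') _ ht)⟩
  have hleSup : ⨆ n, M n ≤ m0 := iSup_le hle
  have hdense := Measure.MeasureDense.of_generateFrom_isSetAlgebra_finite
    (m := ⨆ n, M n) (μ := μ.trim hleSup) h𝒜 (MeasurableSpace.measurableSpace_iSup_eq M)
  obtain ⟨C, ⟨n, hC⟩, hAC⟩ := @Measure.MeasureDense.approx _ (⨆ n, M n) _ _ hdense A hA
    (@measure_ne_top _ (⨆ n, M n) _ (isFiniteMeasure_trim hleSup) A) ε hε
  refine ⟨n, C, hC, ?_⟩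
  rwa [trim_measurableSet_eq hleSup (hA.symmDiff (le_iSup M n _ hC))] at hAC

theorem exists_measurableSet_iInf_measure_symmDiff_eq_zero [MeasurableSpace Ω] {ι : Type*}
    [Preorder ι] (μ : Measure Ω) {M : ι → MeasurableSpace Ω} (hM : Antitone M) {u : ℕ → ι}
    (hu : Tendsto u atTop atTop) {A : Set Ω}
    (happrox : ∀ i, ∀ ε : ℝ, 0 < ε → ∃ C, MeasurableSet[M i] C ∧ μ (A ∆ C) < ENNReal.ofReal ε) :
    ∃ B, MeasurableSet[⨅ i, M i] B ∧ μ (A ∆ B) = 0 := by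
  choose C hC hAC using fun j : ℕ => happrox (u j) ((1 / 2) ^ j) (by positivity)
  refine ⟨limsup C atTop, MeasurableSpace.measurableSet_iInf.2 fun i => ?_, ?_⟩
  · obtain ⟨N, hN⟩ := (hu.eventually_ge_atTop i).exists_forall_of_atTop
    rw [← limsup_nat_add C N]
    exact @MeasurableSet.measurableSet_limsup _ (M i) _ fun j => hM (hN _ le_add_self) _ (hC _)
  · have hsub : A ∆ limsup C atTop ⊆ limsup (fun j => A ∆ C j) atTop := by
      intro x hx
      simp only [mem_limsup_iff_frequently_mem, Set.mem_symmDiff] at hx ⊢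
      rcases hx with ⟨hxA, hxC⟩ | ⟨hxC, hxA⟩
      · exact ((not_frequently.1 hxC).mono fun j hj => Or.inl ⟨hxA, hj⟩).frequently
      · exact hxC.mono fun j hj => Or.inr ⟨hj, hxA⟩
    have hsum : ∑' j, μ (A ∆ C j) ≠ ⊤ := by
      refine ne_top_of_le_ne_top ?_ (ENNReal.tsum_le_tsum fun j => (hAC j).le)
      rw [← ENNReal.ofReal_tsum_of_nonneg (fun j => by positivity) summable_geometric_two]
      exact ENNReal.ofReal_ne_top
    exact measure_mono_null hsub (measure_limsup_atTop_eq_zero hsum)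

end MeasureTheory

section Wiener

variable {m : ℕ}

theorem wienerShift2_zero : wienerShift2 m 0 = id := by
  funext ω
  apply Subtype.ext
  ext u : 1
  show ω.1 (0 + u) - ω.1 0 = ω.1 u
  rw [zero_add, ω.2, sub_zero]

theorem wienerShift2_add (s t : ℝ) :
    wienerShift2 m (s + t) = wienerShift2 m t ∘ wienerShift2 m s := by
  funext ω
  apply Subtype.ext
  ext u : 1
  show ω.1 (s + t + u) - ω.1 (s + t) = (ω.1 (s + (t + u)) - ω.1 s) - (ω.1 (s + t) - ω.1 s)
  rw [add_assoc, sub_sub_sub_cancel_right]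

theorem preimage_wienerShift2_intCast_mul {τ : ℝ} {A : Set (WienerPath2 m)}
    (hA : wienerShift2 m τ ⁻¹' A = A) (n : ℤ) : wienerShift2 m (n * τ) ⁻¹' A = A := by
  have hstep (s : ℝ) : wienerShift2 m (s + τ) ⁻¹' A = wienerShift2 m s ⁻¹' A := by
    rw [wienerShift2_add, Set.preimage_comp, hA]
  induction n using Int.induction_on with
  | zero => simp [wienerShift2_zero]
  | succ n ih => rwa [Int.cast_add, Int.cast_one, add_one_mul, hstep]
  | pred n ih => rwa [← hstep, Int.cast_sub, Int.cast_one, sub_one_mul, sub_add_cancel]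

theorem comap_le_incSigma2 {S : Set ℝ} {u v : ℝ} (hu : u ∈ S) (hv : v ∈ S) :
    MeasurableSpace.comap (fun ω : WienerPath2 m => ω.1 u - ω.1 v) inferInstance
      ≤ incSigma2 m S :=
  le_iSup₂_of_le (f := fun u (_ : u ∈ S) => ⨆ v ∈ S,
      MeasurableSpace.comap (fun ω : WienerPath2 m => ω.1 u - ω.1 v) inferInstance) u hu <|
    le_iSup₂ (f := fun v (_ : v ∈ S) =>
      MeasurableSpace.comap (fun ω : WienerPath2 m => ω.1 u - ω.1 v) inferInstance) v hv

theorem incSigma2_mono {S S' : Set ℝ} (h : S ⊆ S') : incSigma2 m S ≤ incSigma2 m S' :=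
  iSup₂_le fun _ hu => iSup₂_le fun _ hv => comap_le_incSigma2 (h hu) (h hv)

theorem incSigma2_le (S : Set ℝ) :
    incSigma2 m S ≤ (inferInstance : MeasurableSpace (WienerPath2 m)) := by
  refine iSup₂_le fun u _ => iSup₂_le fun v _ => Measurable.comap_le ?_
  have hcont : Continuous fun ω : WienerPath2 m => ω.1 u - ω.1 v :=
    ((continuous_eval_const u).comp continuous_subtype_val).sub
      ((continuous_eval_const v).comp continuous_subtype_val)
  exact hcont.measurable

theorem incSigma2_univ_eq_iSup_Icc :
    incSigma2 m Set.univ = ⨆ N : ℕ, incSigma2 m (Set.Icc (-(N : ℝ)) N) := by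
  refine le_antisymm (iSup₂_le fun u _ => iSup₂_le fun v _ => ?_)
    (iSup_le fun _ => incSigma2_mono (Set.subset_univ _))
  obtain ⟨N, hN⟩ := exists_nat_ge (max |u| |v|)
  refine (comap_le_incSigma2 (S := Set.Icc (-(N : ℝ)) N) ?_ ?_).trans
    (le_iSup (fun N : ℕ => incSigma2 m (Set.Icc (-(N : ℝ)) N)) N) <;>
    simp only [Set.mem_Icc, ← abs_le] <;> linarith [le_max_left |u| |v|, le_max_right |u| |v|]

theorem measurable_wienerShift2_incSigma2 (t : ℝ) (S : Set ℝ) :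
    Measurable[incSigma2 m ((t + ·) '' S), incSigma2 m S] (wienerShift2 m t) := by
  refine Measurable.of_comap_le ?_
  simp only [incSigma2, MeasurableSpace.comap_iSup, MeasurableSpace.comap_comp]
  refine iSup₂_le fun u hu => iSup₂_le fun v hv => ?_
  have hinc : (fun ω : WienerPath2 m => ω.1 u - ω.1 v) ∘ wienerShift2 m t
      = fun ω => ω.1 (t + u) - ω.1 (t + v) := by
    funext ω
    exact sub_sub_sub_cancel_right _ _ _
  rw [hinc]
  exact comap_le_incSigma2 ⟨u, hu, rfl⟩ ⟨v, hv, rfl⟩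

theorem exists_measurableSet_incSigma2_Icc_measure_symmDiff_lt {P : Measure (WienerPath2 m)}
    [IsFiniteMeasure P] (hMP : ∀ t : ℝ, MeasurePreserving (wienerShift2 m t) P P) {τ : ℝ}
    {A : Set (WienerPath2 m)} (hA : MeasurableSet[incSigma2 m Set.univ] A)
    (hAinv : wienerShift2 m τ ⁻¹' A = A) {ε : ℝ} (hε : 0 < ε) :
    ∃ N : ℕ, ∀ n : ℤ, ∃ C, MeasurableSet[incSigma2 m (Set.Icc (n * τ - N) (n * τ + N))] C ∧
      P (A ∆ C) < ENNReal.ofReal ε := by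
  obtain ⟨N, C, hC, hAC⟩ := exists_measurableSet_measure_symmDiff_lt_of_measurableSet_iSup P
    (fun a b h => incSigma2_mono (Set.Icc_subset_Icc (by gcongr) (by gcongr)))
    (fun _ => incSigma2_le _) (incSigma2_univ_eq_iSup_Icc ▸ hA) hε
  refine ⟨N, fun n => ⟨wienerShift2 m (n * τ) ⁻¹' C, ?_, ?_⟩⟩
  · have hshift := measurable_wienerShift2_incSigma2 (n * τ) _ hC
    rwa [Set.image_const_add_Icc, ← sub_eq_add_neg] at hshift
  · have hmeas : MeasurableSet (A ∆ C) := (incSigma2_le _ _ hA).symmDiff (incSigma2_le _ _ hC)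
    calc P (A ∆ (wienerShift2 m (n * τ) ⁻¹' C)) = P (wienerShift2 m (n * τ) ⁻¹' (A ∆ C)) := by
          rw [Set.preimage_symmDiff, preimage_wienerShift2_intCast_mul hAinv n]
      _ = P (A ∆ C) := (hMP _).measure_preimage hmeas.nullMeasurableSet
      _ < ENNReal.ofReal ε := hAC

end Wiener

theorem wiener_shift_invariant_agrees_with_tail_set_general
    (m : ℕ) (τ : ℝ) (hτ : 0 < τ)
    (P : Measure (WienerPath2 m)) [IsProbabilityMeasure P]
    (hMP : ∀ t : ℝ, MeasurePreserving (wienerShift2 m t) P P) :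
    ∀ A : Set (WienerPath2 m),
      MeasurableSet[incSigma2 m Set.univ] A →
      wienerShift2 m τ ⁻¹' A = A →
      (∃ B : Set (WienerPath2 m),
        MeasurableSet[⨅ t : ℝ, incSigma2 m (Set.Ici t)] B ∧ P (symmDiff A B) = 0) ∧
      (∃ B : Set (WienerPath2 m),
        MeasurableSet[⨅ t : ℝ, incSigma2 m (Set.Iic t)] B ∧ P (symmDiff A B) = 0) := by
  intro A hA hAinv
  have happrox {ε : ℝ} (hε : 0 < ε) :=
    exists_measurableSet_incSigma2_Icc_measure_symmDiff_lt hMP hA hAinv hε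
  constructor
  · refine exists_measurableSet_iInf_measure_symmDiff_eq_zero P
      (fun _ _ h => incSigma2_mono (Set.Ici_subset_Ici.2 h)) tendsto_natCast_atTop_atTop
      fun t ε hε => ?_
    obtain ⟨N, hN⟩ := happrox hε
    obtain ⟨n, hn⟩ := exists_int_ge ((t + N) / τ)
    obtain ⟨C, hC, hAC⟩ := hN n
    refine ⟨C, incSigma2_mono (Set.Icc_subset_Ici_self.trans (Set.Ici_subset_Ici.2 ?_)) _ hC, hAC⟩
    linarith [(div_le_iff₀ hτ).1 hn]
  -- Over `ℝᵒᵈ` the past σ-algebras `F_{-∞}^t` are antitone, and `⨅` over `ℝᵒᵈ` is `⨅` over `ℝ`.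
  · refine exists_measurableSet_iInf_measure_symmDiff_eq_zero (ι := ℝᵒᵈ) P
      (M := fun t => incSigma2 m (Set.Iic (OrderDual.ofDual t)))
      (u := fun n : ℕ => OrderDual.toDual (-(n : ℝ)))
      (fun _ _ h => incSigma2_mono (Set.Iic_subset_Iic.2 h))
      (by exact tendsto_neg_atTop_atBot.comp (tendsto_natCast_atTop_atTop (R := ℝ)))
      fun t ε hε => ?_
    obtain ⟨N, hN⟩ := happrox hε
    obtain ⟨n, hn⟩ := exists_int_le ((OrderDual.ofDual t - N) / τ)
    obtain ⟨C, hC, hAC⟩ := hN n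
    refine ⟨C, incSigma2_mono (Set.Icc_subset_Iic_self.trans (Set.Iic_subset_Iic.2 ?_)) _ hC, hAC⟩
    linarith [(le_div_iff₀ hτ).1 hn]

/-- On the two-sided canonical Wiener space, every `θ_τ`-invariant measurable set agrees
mod `ℙ` with a set in the remote-future tail σ-algebra `T^∞ = ⋂_t F_t^∞`, and likewise with
a set in the remote-past tail σ-algebra `T_{-∞} = ⋂_t F_{-∞}^t`. -/
theorem wiener_shift_invariant_agrees_with_tail_set
    (m : ℕ) (τ : ℝ) (hτ : 0 < τ)
    (P : Measure (WienerPath2 m)) [IsProbabilityMeasure P]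
    (hMP : ∀ t : ℝ, MeasurePreserving (wienerShift2 m t) P P)
    (hGauss : ∀ (i : Fin m) (u v : ℝ),
      Measure.map (fun ω : WienerPath2 m => (ω.1 u - ω.1 v) i) P =
        ProbabilityTheory.gaussianReal 0 (Real.nnabs (u - v)))
    (hIndep : ∀ (n : ℕ) (t : Fin (n + 1) → ℝ), Monotone t →
      ProbabilityTheory.iIndepFun (m := fun _ : Fin n => (inferInstance : MeasurableSpace (Fin m → ℝ)))
        (fun (k : Fin n) (ω : WienerPath2 m) => ω.1 (t k.succ) - ω.1 (t k.castSucc)) P) :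
    ∀ A : Set (WienerPath2 m),
      MeasurableSet[incSigma2 m Set.univ] A →
      wienerShift2 m τ ⁻¹' A = A →
      (∃ B : Set (WienerPath2 m),
        MeasurableSet[⨅ t : ℝ, incSigma2 m (Set.Ici t)] B ∧ P (symmDiff A B) = 0) ∧
      (∃ B : Set (WienerPath2 m),
        MeasurableSet[⨅ t : ℝ, incSigma2 m (Set.Iic t)] B ∧ P (symmDiff A B) = 0) :=
  wiener_shift_invariant_agrees_with_tail_set_general m τ hτ P hMP
end
end

section
/- Let P_t be the Markov semigroup of a Markovian cocycle Φ with adapted random periodic path Y of period τ, and ρ_s = Law(Y(s,·)) the associated periodic measure on X. If for fixed s ∈ ℝ the invariant measure ρ_s of the discrete semigroup (P_{kτ})_{k∈ℕ} is ergodic (PS-ergodicity at s), then for every Γ ∈ B(X) with P_τ 1_Γ = 1_Γ ρ_s-a.s., either P-a.s. L_s^ω ∩ Γ = ∅ or P-a.s. L_s^ω ⊆ Γ, where L_s^ω = {Y(s + kτ, ω) : k ∈ ℤ}. -/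
open MeasureTheory

/-! The trace `L_s^ω` is a countable family of random points, and each `Y (s + kτ)` has law
`ρ_s` because `Y (t + τ) = Y t ∘ θ_τ` and `θ_τ` preserves `P`. Ergodicity forces
`ρ_s Γ ∈ {0, 1}`; in the first case every point of the trace avoids `Γ` almost surely, in the
second every point avoids `Γᶜ`, and a countable intersection of full-measure events is still
of full measure. -/

section

variable {Ω X ι : Type*} [MeasurableSpace Ω] [MeasurableSpace X] {P : Measure Ω}

theorem map_eq_map_of_ae_eq_comp {T : Ω → Ω} (hT : MeasurePreserving T P P) {f g : Ω → X}
    (hg : Measurable g) (hfg : f =ᵐ[P] g ∘ T) : P.map f = P.map g := by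
  rw [Measure.map_congr hfg, ← Measure.map_map hg hT.measurable, hT.map_eq]

variable [Countable ι] {μ : Measure X} {Z : ι → Ω → X}

theorem ae_range_inter_eq_empty_of_map_eq (hZ : ∀ i, AEMeasurable (Z i) P)
    (hlaw : ∀ i, P.map (Z i) = μ) {Γ : Set X} (h0 : μ Γ = 0) :
    ∀ᵐ ω ∂P, Set.range (fun i => Z i ω) ∩ Γ = ∅ := by
  have hnull : ∀ i, P (Z i ⁻¹' Γ) = 0 := fun i =>
    nonpos_iff_eq_zero.1 <| (Measure.le_map_apply (hZ i) Γ).trans_eq (by rw [hlaw i, h0])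
  filter_upwards [ae_all_iff.2 fun i => measure_eq_zero_iff_ae_notMem.1 (hnull i)] with ω hω
  refine Set.eq_empty_of_forall_notMem ?_
  rintro _ ⟨⟨i, rfl⟩, hx⟩
  exact hω i hx

theorem ae_range_subset_of_map_eq [IsProbabilityMeasure μ] (hZ : ∀ i, AEMeasurable (Z i) P)
    (hlaw : ∀ i, P.map (Z i) = μ) {Γ : Set X} (hΓ : MeasurableSet Γ) (h1 : μ Γ = 1) :
    ∀ᵐ ω ∂P, Set.range (fun i => Z i ω) ⊆ Γ := by
  filter_upwards [ae_range_inter_eq_empty_of_map_eq hZ hlaw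
    ((prob_compl_eq_zero_iff hΓ).2 h1)] with ω hω
  exact Set.sdiff_eq_empty.1 hω

end

theorem trace_dichotomy_of_PS_ergodic_general
    {Ω : Type*} [MeasurableSpace Ω]
    {X : Type*} [MeasurableSpace X]
    (P : Measure Ω) [IsProbabilityMeasure P]
    (θ : ℝ → Ω → Ω)
    (hθinv : ∀ t, MeasurePreserving (θ t) P P)
    (Φ : ℝ → Ω → X → X)
    (Y : ℝ → Ω → X)
    (hYmeas : ∀ s, Measurable (Y s))
    (τ : ℝ)
    (hYτ : ∀ s, ∀ᵐ ω ∂P, Y (s + τ) ω = Y s (θ τ ω))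
    (s : ℝ)
    (hPSerg : ∀ Γ : Set X, MeasurableSet Γ →
      (∀ᵐ x ∂(Measure.map (Y s) P),
        P {ω | Φ τ ω x ∈ Γ} = Γ.indicator (fun _ => (1 : ENNReal)) x) →
      Measure.map (Y s) P Γ = 0 ∨ Measure.map (Y s) P Γ = 1) :
    ∀ Γ : Set X, MeasurableSet Γ →
      (∀ᵐ x ∂(Measure.map (Y s) P),
        P {ω | Φ τ ω x ∈ Γ} = Γ.indicator (fun _ => (1 : ENNReal)) x) →
      (∀ᵐ ω ∂P, (Set.range fun k : ℤ => Y (s + k * τ) ω) ∩ Γ = ∅) ∨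
      (∀ᵐ ω ∂P, (Set.range fun k : ℤ => Y (s + k * τ) ω) ⊆ Γ) := by
  intro Γ hΓ hinv
  have hper : Function.Periodic (fun t => P.map (Y t)) τ := fun t =>
    map_eq_map_of_ae_eq_comp (hθinv τ) (hYmeas t) (hYτ t)
  have hlaw (k : ℤ) : P.map (Y (s + k * τ)) = P.map (Y s) := hper.int_mul k s
  have hmeas (k : ℤ) : AEMeasurable (Y (s + k * τ)) P := (hYmeas _).aemeasurable
  have := Measure.isProbabilityMeasure_map (μ := P) (hYmeas s).aemeasurable
  rcases hPSerg Γ hΓ hinv with h0 | h1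
  · exact .inl (ae_range_inter_eq_empty_of_map_eq hmeas hlaw h0)
  · exact .inr (ae_range_subset_of_map_eq hmeas hlaw hΓ h1)

/-- If for a fixed `s` the periodic measure `ρ_s = Law(Y(s,·))` is an ergodic invariant
measure of the discrete Markov semigroup `(P_{kτ})` (PS-ergodicity at `s`), then for every
`Γ` with `P_τ 1_Γ = 1_Γ` `ρ_s`-a.s., either `P`-a.s. `L_s^ω ∩ Γ = ∅` or `P`-a.s.
`L_s^ω ⊆ Γ`, where `L_s^ω = {Y(s + kτ, ω) : k ∈ ℤ}` and
`(P_τ 1_Γ)(x) = P{ω : Φ(τ,ω)x ∈ Γ}`. -/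
theorem trace_dichotomy_of_PS_ergodic
    {Ω : Type*} [MeasurableSpace Ω]
    {X : Type*} [TopologicalSpace X] [PolishSpace X] [MeasurableSpace X] [BorelSpace X]
    (P : Measure Ω) [IsProbabilityMeasure P]
    (θ : ℝ → Ω → Ω)
    (hθmeas : ∀ t, Measurable (θ t))
    (hθgrp : ∀ t s ω, θ t (θ s ω) = θ (t + s) ω)
    (hθ0 : ∀ ω, θ 0 ω = ω)
    (hθinv : ∀ t, MeasurePreserving (θ t) P P)
    (Φ : ℝ → Ω → X → X)
    (hΦmeas : ∀ t, Measurable fun p : Ω × X => Φ t p.1 p.2)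
    (hΦ0 : ∀ᵐ ω ∂P, ∀ x, Φ 0 ω x = x)
    (hΦcoc : ∀ t s, 0 ≤ t → 0 ≤ s → ∀ᵐ ω ∂P, ∀ x,
      Φ (t + s) ω x = Φ t (θ s ω) (Φ s ω x))
    (Y : ℝ → Ω → X)
    (hYmeas : ∀ s, Measurable (Y s))
    (τ : ℝ) (hτ : 0 < τ)
    (hYper : ∀ t s, 0 ≤ t → ∀ᵐ ω ∂P, Φ t (θ s ω) (Y s ω) = Y (t + s) ω)
    (hYτ : ∀ s, ∀ᵐ ω ∂P, Y (s + τ) ω = Y s (θ τ ω))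
    (s : ℝ)
    (hPSerg : ∀ Γ : Set X, MeasurableSet Γ →
      (∀ᵐ x ∂(Measure.map (Y s) P),
        P {ω | Φ τ ω x ∈ Γ} = Γ.indicator (fun _ => (1 : ENNReal)) x) →
      Measure.map (Y s) P Γ = 0 ∨ Measure.map (Y s) P Γ = 1) :
    ∀ Γ : Set X, MeasurableSet Γ →
      (∀ᵐ x ∂(Measure.map (Y s) P),
        P {ω | Φ τ ω x ∈ Γ} = Γ.indicator (fun _ => (1 : ENNReal)) x) →
      (∀ᵐ ω ∂P, (Set.range fun k : ℤ => Y (s + k * τ) ω) ∩ Γ = ∅) ∨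
      (∀ᵐ ω ∂P, (Set.range fun k : ℤ => Y (s + k * τ) ω) ⊆ Γ) :=
  trace_dichotomy_of_PS_ergodic_general P θ hθinv Φ Y hYmeas τ hYτ s hPSerg
end

section
/- Assume Condition A: for any s ∈ ℝ, any Γ ∈ B(X) with P_τ 1_Γ = 1_Γ ρ_s-a.s., and P-a.a. ω, either L_s^ω ∩ Γ = ∅ or L_s^ω ⊆ Γ, where L_s^ω = {Y(s+kτ, ω) : k ∈ ℤ}. If additionally the discrete noise system (Ω, F, P, θ_τ) is ergodic, then the τ-periodic measure (ρ_s)_{s∈ℝ} is PS-ergodic, i.e., for each s, ρ_s is an ergodic invariant measure of the discrete Markov semigroup (P_{kτ})_{k∈ℕ}. -/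
open MeasureTheory

/-- Under Condition A (for all `s` and all `Γ` with `P_τ 1_Γ = 1_Γ` `ρ_s`-a.s., almost
surely the trace `L_s^ω = {Y(s+kτ,ω) : k ∈ ℤ}` lies entirely in `Γ` or entirely outside),
if the discrete noise system `(Ω, F, P, θ_τ)` is ergodic, then the τ-periodic measure
`(ρ_s)` is PS-ergodic: each `ρ_s = Law(Y(s,·))` is ergodic for `(P_{kτ})`. -/
theorem PS_ergodic_of_condition_A
    {Ω : Type*} [MeasurableSpace Ω]
    {X : Type*} [TopologicalSpace X] [PolishSpace X] [MeasurableSpace X] [BorelSpace X]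
    (P : Measure Ω) [IsProbabilityMeasure P]
    (θ : ℝ → Ω → Ω)
    (hθmeas : ∀ t, Measurable (θ t))
    (hθgrp : ∀ t s ω, θ t (θ s ω) = θ (t + s) ω)
    (hθ0 : ∀ ω, θ 0 ω = ω)
    (hθinv : ∀ t, MeasurePreserving (θ t) P P)
    (Φ : ℝ → Ω → X → X)
    (hΦmeas : ∀ t, Measurable fun p : Ω × X => Φ t p.1 p.2)
    (hΦ0 : ∀ᵐ ω ∂P, ∀ x, Φ 0 ω x = x)
    (hΦcoc : ∀ t s, 0 ≤ t → 0 ≤ s → ∀ᵐ ω ∂P, ∀ x,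
      Φ (t + s) ω x = Φ t (θ s ω) (Φ s ω x))
    (Y : ℝ → Ω → X)
    (hYmeas : ∀ s, Measurable (Y s))
    (τ : ℝ) (hτ : 0 < τ)
    (hYper : ∀ t s, 0 ≤ t → ∀ᵐ ω ∂P, Φ t (θ s ω) (Y s ω) = Y (t + s) ω)
    (hYτ : ∀ s, ∀ᵐ ω ∂P, Y (s + τ) ω = Y s (θ τ ω))
    (hCondA : ∀ (s : ℝ) (Γ : Set X), MeasurableSet Γ →
      (∀ᵐ x ∂(Measure.map (Y s) P),
        P {ω | Φ τ ω x ∈ Γ} = Γ.indicator (fun _ => (1 : ENNReal)) x) →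
      (∀ᵐ ω ∂P, (Set.range fun k : ℤ => Y (s + k * τ) ω) ∩ Γ = ∅ ∨
        (Set.range fun k : ℤ => Y (s + k * τ) ω) ⊆ Γ))
    (herg : ∀ A : Set Ω, MeasurableSet A → θ τ ⁻¹' A = A → P A = 0 ∨ P A = 1) :
    ∀ (s : ℝ) (Γ : Set X), MeasurableSet Γ →
      (∀ᵐ x ∂(Measure.map (Y s) P),
        P {ω | Φ τ ω x ∈ Γ} = Γ.indicator (fun _ => (1 : ENNReal)) x) →
      Measure.map (Y s) P Γ = 0 ∨ Measure.map (Y s) P Γ = 1 := by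
  intro s Γ hΓ hP
  -- the ergodic structure for θ τ
  have hErg : Ergodic (θ τ) P := by
    refine ⟨hθinv τ, ⟨fun A hA hfix => ?_⟩⟩
    rw [Filter.eventuallyConst_set']
    rcases herg A hA hfix with h | h
    · exact Or.inl (ae_eq_empty.2 h)
    · exact Or.inr (ae_eq_univ.2 ((prob_compl_eq_zero_iff hA).2 h))
  set A : Set Ω := Y s ⁻¹' Γ with hAdef
  have hmap : Measure.map (Y s) P Γ = P A := Measure.map_apply (hYmeas s) hΓ
  -- almost-sure invariance of A
  have hinv : (θ τ ⁻¹' A : Set Ω) =ᵐ[P] A := by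
    have h1 := hCondA s Γ hΓ hP
    have h2 := hYτ s
    rw [Filter.eventuallyEq_set]
    filter_upwards [h1, h2] with ω hω hτω
    have hk0 : Y s ω ∈ Set.range fun k : ℤ => Y (s + k * τ) ω := by
      refine ⟨0, ?_⟩; norm_num
    have hk1 : Y s (θ τ ω) ∈ Set.range fun k : ℤ => Y (s + k * τ) ω := by
      refine ⟨1, ?_⟩; rw [← hτω]; norm_num
    rcases hω with hω | hω
    · constructor
      · intro h; exact absurd (Set.mem_inter hk1 h) (by simp [hω])
      · intro h; exact absurd (Set.mem_inter hk0 h) (by simp [hω])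
    · exact ⟨fun _ => hω hk0, fun _ => hω hk1⟩
  have hAm : MeasurableSet A := (hYmeas s) hΓ
  rcases hErg.quasiErgodic.ae_empty_or_univ₀ hAm.nullMeasurableSet hinv with h | h
  · left; rw [hmap]; exact ae_eq_empty.1 h
  · right; rw [hmap, measure_congr h, measure_univ]
end

section
/- Let Y be a random periodic path of period τ for a random dynamical system Φ, μ_s the associated periodic measures on Ω̄ = Ω × X, and define the sublinear expectation 𝔼̄[φ] = sup_{s∈[0,τ)} 𝔼_{μ_s}[φ] for bounded measurable φ on Ω̄. Then the skew product Θ̄_t preserves 𝔼̄: 𝔼̄[φ ∘ Θ̄_t] = 𝔼̄[φ] for all t ≥ 0 and all bounded measurable φ. -/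
open MeasureTheory

/-- The skew product `Θ̄_t` preserves the sublinear expectation
`𝔼̄[φ] = sup_{s ∈ [0,τ)} 𝔼_{μ_s}[φ]`, where `𝔼_{μ_s}[φ] = ∫ φ(ω, Y(s, θ_{-s}ω)) dP`. -/
theorem skew_product_preserves_sublinear_expectation
    {Ω : Type*} [MeasurableSpace Ω] {X : Type*} [NormedAddCommGroup X]
    [NormedSpace ℝ X] [CompleteSpace X] [SecondCountableTopology X]
    [MeasurableSpace X] [BorelSpace X]
    (P : Measure Ω) [IsProbabilityMeasure P]
    (θ : ℝ → Ω → Ω)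
    (hθmeas : ∀ t, Measurable (θ t))
    (hθgrp : ∀ t s ω, θ t (θ s ω) = θ (t + s) ω)
    (hθ0 : ∀ ω, θ 0 ω = ω)
    (hθinv : ∀ t, MeasurePreserving (θ t) P P)
    (Φ : ℝ → Ω → X → X)
    (hΦmeas : ∀ t, Measurable fun p : Ω × X => Φ t p.1 p.2)
    (hΦ0 : ∀ᵐ ω ∂P, ∀ x, Φ 0 ω x = x)
    (hΦcoc : ∀ t s, 0 ≤ t → 0 ≤ s → ∀ᵐ ω ∂P, ∀ x,
      Φ (t + s) ω x = Φ t (θ s ω) (Φ s ω x))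
    (Y : ℝ → Ω → X)
    (hYmeas : ∀ s, Measurable (Y s))
    (τ : ℝ) (hτ : 0 < τ)
    (hYper : ∀ t s, 0 ≤ t → ∀ᵐ ω ∂P, Φ t (θ s ω) (Y s ω) = Y (t + s) ω)
    (hYτ : ∀ s, ∀ᵐ ω ∂P, Y (s + τ) ω = Y s (θ τ ω))
    (μ : ℝ → Measure (Ω × X))
    (hμ : ∀ s, μ s = Measure.map (fun ω => (ω, Y s (θ (-s) ω))) P)
    (t : ℝ) (ht : 0 ≤ t)
    (φ : Ω × X → ℝ) (hφmeas : Measurable φ) (hφbdd : ∃ C : ℝ, ∀ z, |φ z| ≤ C) :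
    (⨆ s : Set.Ico (0 : ℝ) τ,
        ∫ ω, φ (θ t ω, Φ t ω (Y (s : ℝ) (θ (-(s : ℝ)) ω))) ∂P) =
    ⨆ s : Set.Ico (0 : ℝ) τ, ∫ ω, φ (ω, Y (s : ℝ) (θ (-(s : ℝ)) ω)) ∂P := by

  classical
  set F : ℝ → ℝ := fun s => ∫ ω, φ (ω, Y s (θ (-s) ω)) ∂P with hF
  have hFmeas : ∀ s : ℝ, Measurable fun ω => φ (ω, Y s (θ (-s) ω)) := fun s =>
    hφmeas.comp (measurable_id.prodMk ((hYmeas s).comp (hθmeas (-s))))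
  have hae : ∀ (c : ℝ) {p : Ω → Prop}, (∀ᵐ ω ∂P, p ω) → ∀ᵐ ω ∂P, p (θ c ω) :=
    fun c p hp => ((hθinv c).quasiMeasurePreserving.tendsto_ae).eventually hp
  have hcov : ∀ (c : ℝ) (f : Ω → ℝ), Measurable f →
      ∫ ω, f (θ c ω) ∂P = ∫ ω, f ω ∂P := by
    intro c f hf
    conv_rhs => rw [← (hθinv c).map_eq]
    rw [integral_map (hθmeas c).aemeasurable hf.aestronglyMeasurable]
  have hA : ∀ s : ℝ,
      (∫ ω, φ (θ t ω, Φ t ω (Y s (θ (-s) ω))) ∂P) = F (t + s) := by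
    intro s
    have h1 : ∀ᵐ ω ∂P, Φ t ω (Y s (θ (-s) ω)) = Y (t + s) (θ (-s) ω) := by
      filter_upwards [hae (-s) (hYper t s ht)] with ω h
      calc Φ t ω (Y s (θ (-s) ω))
          = Φ t (θ s (θ (-s) ω)) (Y s (θ (-s) ω)) := by
            rw [hθgrp, show s + -s = 0 by ring, hθ0]
        _ = Y (t + s) (θ (-s) ω) := h
    have h2 : (∫ ω, φ (θ t ω, Φ t ω (Y s (θ (-s) ω))) ∂P)
        = ∫ ω, φ (θ t ω, Y (t + s) (θ (-(t + s)) (θ t ω))) ∂P := by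
      apply integral_congr_ae
      filter_upwards [h1] with ω h
      rw [h, hθgrp, show -(t + s) + t = -s by ring]
    rw [h2]
    exact hcov t (fun ω => φ (ω, Y (t + s) (θ (-(t + s)) ω))) (hFmeas (t + s))
  have hBτ : ∀ s : ℝ, F (s + τ) = F s := by
    intro s
    apply integral_congr_ae
    filter_upwards [hae (-(s + τ)) (hYτ s)] with ω h
    rw [show ((fun s => ∫ ω, φ (ω, Y s (θ (-s) ω)) ∂P) : ℝ → ℝ) = F from rfl] at *
    show φ (ω, Y (s + τ) (θ (-(s + τ)) ω)) = φ (ω, Y s (θ (-s) ω))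
    rw [h, hθgrp, show τ + -(s + τ) = -s by ring]
  have hB : ∀ (s : ℝ) (n : ℕ), F (s + n * τ) = F s := by
    intro s n
    induction n with
    | zero => simp
    | succ n ih =>
      have h : s + ((n : ℕ) + 1 : ℕ) * τ = (s + n * τ) + τ := by push_cast; ring
      rw [h, hBτ, ih]
  have hBZ : ∀ (a b : ℝ) (k : ℤ), 0 ≤ k → a = b + k * τ → F a = F b := by
    intro a b k hk hab
    lift k to ℕ using hk
    subst hab
    have := hB b k
    push_cast
    push_cast at this
    exact this
  have hrange : Set.range (fun s : Set.Ico (0 : ℝ) τ => F (t + (s : ℝ)))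
      = Set.range (fun s : Set.Ico (0 : ℝ) τ => F (s : ℝ)) := by
    ext x
    constructor
    · rintro ⟨⟨s, hs⟩, rfl⟩
      have hmem := toIcoMod_mem_Ico hτ 0 (t + s)
      rw [zero_add] at hmem
      refine ⟨⟨toIcoMod hτ 0 (t + s), hmem⟩, ?_⟩
      simp only
      set k := toIcoDiv hτ 0 (t + s) with hkdef
      have hkτ : (k : ℝ) * τ = (t + s) - toIcoMod hτ 0 (t + s) := by
        rw [toIcoMod, zsmul_eq_mul]; ring
      have hklt : (-1 : ℝ) * τ < (k : ℝ) * τ := by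
        rw [hkτ]; nlinarith [hmem.2, hs.1, ht, hmem.1]
      have hk : (0 : ℤ) ≤ k := by
        by_contra hcon
        push_neg at hcon
        have h1 : k ≤ -1 := by omega
        have h2 : (k : ℝ) ≤ -1 := by exact_mod_cast h1
        nlinarith
      exact (hBZ (t + s) (toIcoMod hτ 0 (t + s)) k hk (by rw [hkτ]; ring)).symm
    · rintro ⟨⟨s, hs⟩, rfl⟩
      have hmem := toIcoMod_mem_Ico hτ 0 (s - t)
      rw [zero_add] at hmem
      refine ⟨⟨toIcoMod hτ 0 (s - t), hmem⟩, ?_⟩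
      simp only
      set k := toIcoDiv hτ 0 (s - t) with hkdef
      have hkτ : toIcoMod hτ 0 (s - t) = (s - t) - (k : ℝ) * τ := by
        rw [toIcoMod, zsmul_eq_mul]
      have hklt : (-1 : ℝ) * τ < (-k : ℝ) * τ := by
        push_cast
        nlinarith [hmem.1, hs.2, ht, hkτ]
      have hk : (0 : ℤ) ≤ -k := by
        by_contra hcon
        push_neg at hcon
        have h1 : -k ≤ -1 := by omega
        have h2 : ((-k : ℤ) : ℝ) ≤ -1 := by exact_mod_cast h1
        push_cast at h2
        nlinarith
      refine hBZ (t + toIcoMod hτ 0 (s - t)) s (-k) hk ?_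
      rw [hkτ]; push_cast; ring
  have hL : (⨆ s : Set.Ico (0 : ℝ) τ,
      ∫ ω, φ (θ t ω, Φ t ω (Y (s : ℝ) (θ (-(s : ℝ)) ω))) ∂P)
      = ⨆ s : Set.Ico (0 : ℝ) τ, F (t + (s : ℝ)) := iSup_congr fun s => hA s
  have hR : (⨆ s : Set.Ico (0 : ℝ) τ, ∫ ω, φ (ω, Y (s : ℝ) (θ (-(s : ℝ)) ω)) ∂P)
      = ⨆ s : Set.Ico (0 : ℝ) τ, F (s : ℝ) := rfl
  rw [hL, hR, ← sSup_range, ← sSup_range, hrange]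
end

section
/- Under Condition P, if (Ω × X, F ⊗ B(X), μ_s, Θ̄_τ) is ergodic for some s, then the sublinear expectation dynamical system (Ω̄, L_b(Ω̄), 𝔼̄, (Θ̄_t)_{t≥0}) with 𝔼̄[φ] = sup_{s∈[0,τ)} 𝔼_{μ_s}[φ] is ergodic: for any A ∈ F ⊗ B(X) with Θ̄_t^{-1}A = A for all t ≥ 0, either 𝔼̄[1_A] = 0 or 𝔼̄[1_{A^c}] = 0. -/
open MeasureTheory

/-- If the skew-product system `(Ω × X, μ_s, Θ̄_τ)` is ergodic for some `s`, then the
sublinear expectation dynamical system generated by `𝔼̄ = sup_{s ∈ [0,τ)} 𝔼_{μ_s}` is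
ergodic: any set invariant under the whole skew-product semiflow has upper capacity 0, or
its complement does. -/
theorem sublinear_expectation_system_ergodic
    {Ω : Type*} [MeasurableSpace Ω] {X : Type*} [NormedAddCommGroup X]
    [NormedSpace ℝ X] [CompleteSpace X] [SecondCountableTopology X]
    [MeasurableSpace X] [BorelSpace X]
    (P : Measure Ω) [IsProbabilityMeasure P]
    (θ : ℝ → Ω → Ω)
    (hθmeas : ∀ t, Measurable (θ t))
    (hθgrp : ∀ t s ω, θ t (θ s ω) = θ (t + s) ω)
    (hθ0 : ∀ ω, θ 0 ω = ω)
    (hθinv : ∀ t, MeasurePreserving (θ t) P P)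
    (Φ : ℝ → Ω → X → X)
    (hΦmeas : ∀ t, Measurable fun p : Ω × X => Φ t p.1 p.2)
    (hΦ0 : ∀ᵐ ω ∂P, ∀ x, Φ 0 ω x = x)
    (hΦcoc : ∀ t s, 0 ≤ t → 0 ≤ s → ∀ᵐ ω ∂P, ∀ x,
      Φ (t + s) ω x = Φ t (θ s ω) (Φ s ω x))
    (Y : ℝ → Ω → X)
    (hYmeas : ∀ s, Measurable (Y s))
    (τ : ℝ) (hτ : 0 < τ)
    (hYper : ∀ t s, 0 ≤ t → ∀ᵐ ω ∂P, Φ t (θ s ω) (Y s ω) = Y (t + s) ω)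
    (hYτ : ∀ s, ∀ᵐ ω ∂P, Y (s + τ) ω = Y s (θ τ ω))
    (μ : ℝ → Measure (Ω × X))
    (hμ : ∀ s, μ s = Measure.map (fun ω => (ω, Y s (θ (-s) ω))) P)
    (s₀ : ℝ)
    (herg : ∀ A : Set (Ω × X), MeasurableSet A →
      (fun p : Ω × X => (θ τ p.1, Φ τ p.1 p.2)) ⁻¹' A = A →
      μ s₀ A = 0 ∨ μ s₀ A = 1) :
    ∀ A : Set (Ω × X), MeasurableSet A →
      (∀ t : ℝ, 0 ≤ t → (fun p : Ω × X => (θ t p.1, Φ t p.1 p.2)) ⁻¹' A = A) →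
      (⨆ s : Set.Ico (0 : ℝ) τ, μ (s : ℝ) A) = 0 ∨
      (⨆ s : Set.Ico (0 : ℝ) τ, μ (s : ℝ) Aᶜ) = 0 := by
  intro A hA hAt
  -- measurability of the graph maps
  have hgmeas : ∀ s : ℝ, Measurable (fun ω => (ω, Y s (θ (-s) ω))) := fun s =>
    measurable_id.prodMk ((hYmeas s).comp (hθmeas (-s)))
  have hΘmeas : ∀ t : ℝ, Measurable (fun p : Ω × X => (θ t p.1, Φ t p.1 p.2)) := fun t =>
    ((hθmeas t).comp measurable_fst).prodMk (hΦmeas t)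
  -- key: μ s A = μ (s + t) A for t ≥ 0
  have key : ∀ s t : ℝ, 0 ≤ t → μ s A = μ (s + t) A := by
    intro s t ht
    -- a.e. equality of Θ̄_t ∘ g_s and g_{s+t} ∘ θ t
    have hae : (fun ω => (θ t ω, Φ t ω (Y s (θ (-s) ω)))) =ᵐ[P]
        (fun ω => (θ t (ω : Ω), Y (s + t) (θ (-(s + t)) (θ t ω)))) := by
      have h1 : ∀ᵐ ω ∂P, Φ t (θ s (θ (-s) ω)) (Y s (θ (-s) ω)) = Y (t + s) (θ (-s) ω) :=
        ((hθinv (-s)).quasiMeasurePreserving.tendsto_ae).eventually (hYper t s ht)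
      filter_upwards [h1] with ω h
      have hss : θ s (θ (-s) ω) = ω := by rw [hθgrp]; simp [hθ0]
      have hst : θ (-(s + t)) (θ t ω) = θ (-s) ω := by
        rw [hθgrp]; ring_nf
      rw [hst, add_comm s t, ← h, hss]
    calc μ s A = μ s ((fun p : Ω × X => (θ t p.1, Φ t p.1 p.2)) ⁻¹' A) := by
          rw [hAt t ht]
      _ = P ((fun ω => (ω, Y s (θ (-s) ω))) ⁻¹'
            ((fun p : Ω × X => (θ t p.1, Φ t p.1 p.2)) ⁻¹' A)) := by
          rw [hμ s]; exact Measure.map_apply (hgmeas s) ((hΘmeas t) hA)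
      _ = Measure.map (fun ω => (θ t ω, Φ t ω (Y s (θ (-s) ω)))) P A := by
          rw [Measure.map_apply (show Measurable (fun ω => (θ t ω, Φ t ω (Y s (θ (-s) ω)))) from
            (hΘmeas t).comp (hgmeas s)) hA]
          rfl
      _ = Measure.map (fun ω => (θ t ω, Y (s + t) (θ (-(s + t)) (θ t ω)))) P A := by
          rw [Measure.map_congr hae]
      _ = μ (s + t) A := by
          have hcomp : (fun ω => (θ t ω, Y (s + t) (θ (-(s + t)) (θ t ω)))) =
              (fun ω => (ω, Y (s + t) (θ (-(s + t)) ω))) ∘ θ t := rfl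
          rw [hcomp, ← Measure.map_map (hgmeas (s + t)) (hθmeas t), (hθinv t).map_eq,
            hμ (s + t)]
  -- μ s A is constant in s
  have hconst : ∀ s : ℝ, μ s A = μ s₀ A := by
    intro s
    have h1 : μ s A = μ (max s s₀) A := by
      have := key s (max s s₀ - s) (by simp [le_max_left])
      rwa [add_sub_cancel] at this
    have h2 : μ s₀ A = μ (max s s₀) A := by
      have := key s₀ (max s s₀ - s₀) (by simp [le_max_right])
      rwa [add_sub_cancel] at this
    rw [h1, h2]
  -- each μ s is a probability measure
  have huniv : ∀ s : ℝ, μ s Set.univ = 1 := by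
    intro s
    rw [hμ s, Measure.map_apply (hgmeas s) MeasurableSet.univ]
    simp
  rcases herg A hA (hAt τ hτ.le) with h | h
  · left
    rw [ENNReal.iSup_eq_zero]
    intro ⟨s, hs⟩
    simpa [hconst s] using h
  · right
    rw [ENNReal.iSup_eq_zero]
    intro ⟨s, hs⟩
    have hc := measure_compl (μ := μ s) hA
      (by rw [hconst s, h]; exact ENNReal.one_ne_top)
    rw [hc, huniv s, hconst s, h, tsub_self]
end

section
/- Let Ω̂ = [0,2) = Ω₁ ∪ Ω₂ with Ω₁ = [0,1), Ω₂ = [1,2), α irrational, and θ̂_α(x) = ((x+α) mod 1) + 1 for x ∈ Ω₁ and θ̂_α(x) = x − 1 for x ∈ Ω₂. Let P̄_i(A) = Leb(A ∩ Ω_i) and Ê[X] = 𝔼_{P̄₁}[X] ∨ 𝔼_{P̄₂}[X]. Then the sublinear dynamical system (Ω̂, B(Ω̂), θ̂_α, Ê) is ergodic: any Borel A with θ̂_α^{-1}A = A satisfies Ê[1_A] = 0 or Ê[1_{A^c}] = 0. -/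
open MeasureTheory

noncomputable section

/-- The map `θ̂_α` on `Ω̂ = [0,2)`: rotation by `α` composed with swapping the two halves:
`θ̂_α x = ((x + α) mod 1) + 1` for `x ∈ [0,1)` and `θ̂_α x = x - 1` for `x ∈ [1,2)`. -/
def thetaHat (α : ℝ) (x : ↥(Set.Ico (0 : ℝ) 2)) : ↥(Set.Ico (0 : ℝ) 2) :=
  if h : (x : ℝ) < 1 then
    ⟨Int.fract ((x : ℝ) + α) + 1,
      Set.mem_Ico.mpr ⟨by linarith [Int.fract_nonneg ((x : ℝ) + α)],
        by linarith [Int.fract_lt_one ((x : ℝ) + α)]⟩⟩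
  else
    ⟨(x : ℝ) - 1,
      Set.mem_Ico.mpr ⟨by linarith [not_lt.mp h], by linarith [(Set.mem_Ico.mp x.2).2]⟩⟩

/-- Lebesgue measure on `Ω̂ = [0,2)`. -/
def lebHat : Measure ↥(Set.Ico (0 : ℝ) 2) :=
  Measure.comap Subtype.val volume

/-- `mk (fract y) = mk y` on the unit additive circle. -/
lemma coe_fract_eq (y : ℝ) : ((Int.fract y : ℝ) : AddCircle (1:ℝ)) = (y : AddCircle (1:ℝ)) := by
  have : Int.fract y - y ∈ AddSubgroup.zmultiples (1:ℝ) := by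
    rw [AddSubgroup.mem_zmultiples_iff]
    exact ⟨-⌊y⌋, by rw [zsmul_eq_mul, Int.fract]; push_cast; ring⟩
  exact (QuotientAddGroup.eq_iff_sub_mem.mpr this)

/-- Integer multiples of an irrational angle are dense in the unit circle. -/
lemma denseRange_zsmul_irrational (α : ℝ) (hα : Irrational α) :
    DenseRange (fun n : ℤ => n • ((α : ℝ) : AddCircle (1:ℝ))) := by
  set S := AddSubgroup.closure ({α, 1} : Set ℝ) with hSdef
  have hαS : α ∈ S := AddSubgroup.subset_closure (by simp)
  have h1S : (1:ℝ) ∈ S := AddSubgroup.subset_closure (by simp)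
  have hd : Dense (S : Set ℝ) := by
    rcases S.dense_or_cyclic with h | ⟨a, ha⟩
    · exact h
    · exfalso
      rw [ha, AddSubgroup.mem_closure_singleton] at hαS h1S
      obtain ⟨m, hm⟩ := hαS
      obtain ⟨n, hn⟩ := h1S
      have hn0 : (n : ℝ) ≠ 0 := by
        rintro h0
        rw [zsmul_eq_mul, h0, zero_mul] at hn
        exact one_ne_zero hn.symm
      refine hα ⟨(m : ℚ) / (n : ℚ), ?_⟩
      have ha0 : a = 1 / (n : ℝ) := by
        field_simp
        rw [zsmul_eq_mul] at hn
        linarith [hn]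
      rw [← hm, zsmul_eq_mul, ha0]
      push_cast
      ring
  have hcont : Continuous (QuotientAddGroup.mk : ℝ → AddCircle (1:ℝ)) := continuous_quotient_mk'
  have hdr : DenseRange (QuotientAddGroup.mk : ℝ → AddCircle (1:ℝ)) :=
    QuotientAddGroup.mk_surjective.denseRange
  have hdi : Dense ((QuotientAddGroup.mk : ℝ → AddCircle (1:ℝ)) '' S) :=
    hdr.dense_image hcont hd
  refine Dense.mono ?_ hdi
  rintro _ ⟨x, hx, rfl⟩
  have : (x : AddCircle (1:ℝ)) ∈ AddSubgroup.zmultiples ((α : ℝ) : AddCircle (1:ℝ)) := by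
    revert hx
    refine fun hx => AddSubgroup.closure_induction ?_ ?_ ?_ ?_ hx
    · rintro y (rfl | rfl)
      · exact AddSubgroup.mem_zmultiples _
      · show ((1:ℝ) : AddCircle (1:ℝ)) ∈ _
        have : ((1:ℝ) : AddCircle (1:ℝ)) = 0 := by
          rw [AddCircle.coe_eq_zero_iff]
          exact ⟨1, by simp⟩
        rw [this]; exact zero_mem _
    · exact zero_mem _
    · intro y z _ _ hy hz
      rw [AddCircle.coe_add]; exact add_mem hy hz
    · intro y _ hy
      rw [AddCircle.coe_neg]; exact neg_mem hy
  rw [AddSubgroup.mem_zmultiples_iff] at this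
  obtain ⟨k, hk⟩ := this
  exact ⟨k, hk⟩

/-- Key ergodicity lemma on `[0,1)`: a measurable `S ⊆ [0,1)` invariant under
`y ↦ fract (y + α)` with `α` irrational is null or conull in `[0,1)`. -/
lemma key_lemma (α : ℝ) (hα : Irrational α) (S : Set ℝ) (hSm : MeasurableSet S)
    (hSsub : S ⊆ Set.Ico (0:ℝ) 1)
    (hinv : ∀ y ∈ Set.Ico (0:ℝ) 1, (y ∈ S ↔ Int.fract (y + α) ∈ S)) :
    volume S = 0 ∨ volume (Set.Ico (0:ℝ) 1 \ S) = 0 := by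
  classical
  set s : Set (AddCircle (1:ℝ)) :=
    {z | ((AddCircle.equivIco 1 0 z : ℝ)) ∈ S} with hsdef
  have hrep : ∀ y : ℝ, ((AddCircle.equivIco 1 0 ((y : ℝ) : AddCircle (1:ℝ)) : ℝ)) = Int.fract y := by
    intro y
    have := AddCircle.coe_equivIco_mk_apply (1:ℝ) y
    simpa using this
  have hmem : ∀ y : ℝ, ((y : ℝ) : AddCircle (1:ℝ)) ∈ s ↔ Int.fract y ∈ S := by
    intro y; rw [hsdef]; simp [hrep y]
  have hsm : MeasurableSet s := by
    have : s = (AddCircle.measurableEquivIco 1 0) ⁻¹' (Subtype.val ⁻¹' S) := rfl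
    rw [this]
    exact (AddCircle.measurableEquivIco 1 0).measurable (measurable_subtype_coe hSm)
  have hinv' : (fun z => ((α : ℝ) : AddCircle (1:ℝ)) + z) ⁻¹' s = s := by
    ext z
    obtain ⟨y, rfl⟩ := QuotientAddGroup.mk_surjective z
    have h1 : ((α : ℝ) : AddCircle (1:ℝ)) + (y : AddCircle (1:ℝ)) = ((α + y : ℝ) : AddCircle (1:ℝ)) := by
      rw [← AddCircle.coe_add]
    simp only [Set.mem_preimage, h1, hmem]
    have hfr : Int.fract y ∈ Set.Ico (0:ℝ) 1 := ⟨Int.fract_nonneg y, Int.fract_lt_one y⟩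
    rw [hinv (Int.fract y) hfr]
    have h2 : Int.fract (Int.fract y + α) = Int.fract (α + y) := by
      have h3 : Int.fract y + α = y + α - (⌊y⌋ : ℤ) := by rw [Int.fract]; push_cast; ring
      rw [h3, Int.fract_sub_intCast, add_comm]
    rw [h2]
  have herg := (ergodic_add_left_of_denseRange_zsmul
    (denseRange_zsmul_irrational α hα) (volume : Measure (AddCircle (1:ℝ))))
  have := herg.measure_self_or_compl_eq_zero hsm hinv'
  have hIcoIoc : (Set.Ioc (0:ℝ) (0+1)) =ᵐ[volume] (Set.Ico (0:ℝ) 1) := by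
    rw [zero_add]
    exact (MeasureTheory.Ico_ae_eq_Ioc (a := (0:ℝ)) (b := 1)).symm
  have hvols : volume s = volume S := by
    rw [AddCircle.add_projection_respects_measure (1:ℝ) 0 hsm]
    have h1 : ((((↑) : ℝ → AddCircle (1:ℝ)) ⁻¹' s ∩ Set.Ioc (0:ℝ) (0+1) : Set ℝ)) =ᵐ[volume]
        ((((↑) : ℝ → AddCircle (1:ℝ)) ⁻¹' s ∩ Set.Ico (0:ℝ) 1 : Set ℝ)) :=
      Filter.EventuallyEq.inter (Filter.EventuallyEq.refl _ _) hIcoIoc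
    rw [measure_congr h1]
    congr 1
    ext y
    simp only [Set.mem_inter_iff, Set.mem_preimage]
    constructor
    · rintro ⟨hy, hy2⟩
      rw [hmem y, Int.fract_eq_self.mpr hy2] at hy
      exact hy
    · intro hy
      refine ⟨?_, hSsub hy⟩
      rw [hmem y, Int.fract_eq_self.mpr (hSsub hy)]
      exact hy
  have hvolsc : volume sᶜ = volume (Set.Ico (0:ℝ) 1 \ S) := by
    rw [AddCircle.add_projection_respects_measure (1:ℝ) 0 hsm.compl]
    have h1 : ((((↑) : ℝ → AddCircle (1:ℝ)) ⁻¹' sᶜ ∩ Set.Ioc (0:ℝ) (0+1) : Set ℝ)) =ᵐ[volume]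
        ((((↑) : ℝ → AddCircle (1:ℝ)) ⁻¹' sᶜ ∩ Set.Ico (0:ℝ) 1 : Set ℝ)) :=
      Filter.EventuallyEq.inter (Filter.EventuallyEq.refl _ _) hIcoIoc
    rw [measure_congr h1]
    congr 1
    ext y
    simp only [Set.mem_inter_iff, Set.mem_preimage, Set.mem_compl_iff, Set.mem_diff]
    constructor
    · rintro ⟨hy, hy2⟩
      rw [hmem y, Int.fract_eq_self.mpr hy2] at hy
      exact ⟨hy2, hy⟩
    · rintro ⟨hy2, hy⟩
      refine ⟨?_, hy2⟩
      rw [hmem y, Int.fract_eq_self.mpr hy2]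
      exact hy
  rcases this with h | h
  · left; rw [← hvols]; exact h
  · right; rw [← hvolsc]; exact h

end

noncomputable section

abbrev OmegaHat : Type := ↥(Set.Ico (0 : ℝ) 2)

lemma mem_image_val_iff (B : Set OmegaHat) (y : ℝ) (hy : y ∈ Set.Ico (0:ℝ) 2) :
    y ∈ Subtype.val '' B ↔ (⟨y, hy⟩ : OmegaHat) ∈ B := by
  constructor
  · rintro ⟨x, hxB, rfl⟩
    rwa [show (⟨(x : ℝ), hy⟩ : OmegaHat) = x from Subtype.ext rfl]
  · intro h; exact ⟨⟨y, hy⟩, h, rfl⟩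

lemma upper_image (α : ℝ) (B : Set OmegaHat) (hBinv : thetaHat α ⁻¹' B = B) :
    Subtype.val '' (B ∩ {x : OmegaHat | 1 ≤ (x : ℝ)}) =
      (fun t => t + 1) '' (Subtype.val '' (B ∩ {x : OmegaHat | (x : ℝ) < 1})) := by
  have hiff : ∀ x : OmegaHat, thetaHat α x ∈ B ↔ x ∈ B := fun x => Set.ext_iff.mp hBinv x
  ext y
  constructor
  · rintro ⟨x, ⟨hxB, hx1⟩, rfl⟩
    simp only [Set.mem_setOf_eq] at hx1
    have hlt : ¬ ((x : ℝ) < 1) := not_lt.mpr hx1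
    have hθ : thetaHat α x = ⟨(x : ℝ) - 1, _⟩ := dif_neg hlt
    have hθB : thetaHat α x ∈ B := (hiff x).mpr hxB
    rw [hθ] at hθB
    refine ⟨(x : ℝ) - 1, ⟨⟨(x : ℝ) - 1, _⟩, ⟨hθB, ?_⟩, rfl⟩, by ring⟩
    simp only [Set.mem_setOf_eq]
    have := (Set.mem_Ico.mp x.2).2
    linarith
  · rintro ⟨t, ⟨x, ⟨hxB, hx1⟩, rfl⟩, rfl⟩
    simp only [Set.mem_setOf_eq] at hx1
    have hx0 := (Set.mem_Ico.mp x.2).1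
    have hmem2 : (x : ℝ) + 1 ∈ Set.Ico (0:ℝ) 2 := Set.mem_Ico.mpr ⟨by linarith, by linarith⟩
    set x' : OmegaHat := ⟨(x : ℝ) + 1, hmem2⟩ with hx'
    have hlt : ¬ ((x' : ℝ) < 1) := by simp only [hx']; push_cast; intro h; linarith [h]
    have hθx : thetaHat α x' = x := by
      apply Subtype.ext
      simp only [thetaHat, dif_neg hlt]
      simp [hx']
    have hθB : thetaHat α x' ∈ B := by rw [hθx]; exact hxB
    have hx'B : x' ∈ B := (hiff x').mp hθB
    exact ⟨x', ⟨hx'B, by simp [hx']; linarith⟩, rfl⟩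

lemma lower_rot_inv (α : ℝ) (B : Set OmegaHat) (hBinv : thetaHat α ⁻¹' B = B) :
    ∀ y ∈ Set.Ico (0:ℝ) 1,
      (y ∈ Subtype.val '' (B ∩ {x : OmegaHat | (x : ℝ) < 1}) ↔
       Int.fract (y + α) ∈ Subtype.val '' (B ∩ {x : OmegaHat | (x : ℝ) < 1})) := by
  have hiff : ∀ x : OmegaHat, thetaHat α x ∈ B ↔ x ∈ B := fun x => Set.ext_iff.mp hBinv x
  intro y hy
  obtain ⟨hy0, hy1⟩ := Set.mem_Ico.mp hy
  have hy2 : y ∈ Set.Ico (0:ℝ) 2 := Set.mem_Ico.mpr ⟨hy0, by linarith⟩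
  set x : OmegaHat := ⟨y, hy2⟩ with hxdef
  have hxlt : (x : ℝ) < 1 := hy1
  have hθ : thetaHat α x = ⟨Int.fract ((x : ℝ) + α) + 1, _⟩ := dif_pos hxlt
  have h1 : y ∈ Subtype.val '' (B ∩ {x : OmegaHat | (x : ℝ) < 1}) ↔ x ∈ B := by
    rw [mem_image_val_iff _ y hy2]
    constructor
    · exact fun h => h.1
    · exact fun h => ⟨h, hy1⟩
  -- the fract(y+α)+1 point
  have hfr0 := Int.fract_nonneg (y + α)
  have hfr1 := Int.fract_lt_one (y + α)
  have hfm2 : Int.fract (y + α) + 1 ∈ Set.Ico (0:ℝ) 2 := Set.mem_Ico.mpr ⟨by linarith, by linarith⟩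
  have h2 : x ∈ B ↔ Int.fract (y + α) + 1 ∈ Subtype.val '' (B ∩ {x : OmegaHat | 1 ≤ (x : ℝ)}) := by
    rw [mem_image_val_iff _ _ hfm2]
    have hval : thetaHat α x = ⟨Int.fract (y + α) + 1, hfm2⟩ := by
      rw [hθ]
    constructor
    · intro h
      refine ⟨?_, by simp only [Set.mem_setOf_eq]; linarith⟩
      rw [← hval]; exact (hiff x).mpr h
    · rintro ⟨h, -⟩
      rw [← hval] at h
      exact (hiff x).mp h
  rw [h1, h2, upper_image α B hBinv]
  constructor
  · rintro ⟨t, ht, hteq⟩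
    have : t = Int.fract (y + α) := by simpa using hteq
    rwa [← this]
  · intro h
    exact ⟨Int.fract (y + α), h, rfl⟩

lemma halves_eq (α : ℝ) (B : Set OmegaHat) (hB : MeasurableSet B) (hBinv : thetaHat α ⁻¹' B = B) :
    lebHat.restrict {x : OmegaHat | (x : ℝ) < 1} B
        = volume (Subtype.val '' (B ∩ {x : OmegaHat | (x : ℝ) < 1})) ∧
    lebHat.restrict {x : OmegaHat | 1 ≤ (x : ℝ)} B
        = volume (Subtype.val '' (B ∩ {x : OmegaHat | (x : ℝ) < 1})) := by
  have hemb : MeasurableEmbedding (Subtype.val : OmegaHat → ℝ) :=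
    MeasurableEmbedding.subtype_coe measurableSet_Ico
  have hU1 : MeasurableSet {x : OmegaHat | (x : ℝ) < 1} := measurable_subtype_coe measurableSet_Iio
  have hU2 : MeasurableSet {x : OmegaHat | 1 ≤ (x : ℝ)} := measurable_subtype_coe measurableSet_Ici
  constructor
  · rw [Measure.restrict_apply hB, lebHat, hemb.comap_apply]
  · rw [Measure.restrict_apply hB, lebHat, hemb.comap_apply, upper_image α B hBinv]
    have himg : (fun t : ℝ => t + 1) '' (Subtype.val '' (B ∩ {x : OmegaHat | (x : ℝ) < 1}))
        = (fun t : ℝ => t + (-1)) ⁻¹' (Subtype.val '' (B ∩ {x : OmegaHat | (x : ℝ) < 1})) := by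
      ext t
      simp only [Set.mem_image, Set.mem_preimage]
      constructor
      · rintro ⟨u, hu, rfl⟩; simpa using hu
      · intro h; exact ⟨t + (-1), h, by ring⟩
    rw [himg, measure_preimage_add_right]

/-- The sublinear (upper expectation) dynamical system `(Ω̂, B(Ω̂), θ̂_α, Ê)` with
`Ê[1_A] = P̄₁(A) ∨ P̄₂(A)`, `P̄ᵢ = Leb(· ∩ Ωᵢ)`, is ergodic when `α` is irrational:
every `θ̂_α`-invariant Borel set `A` satisfies `Ê[1_A] = 0` or `Ê[1_{Aᶜ}] = 0`. -/
theorem sublinear_two_interval_system_ergodic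
    (α : ℝ) (hα : Irrational α) :
    ∀ A : Set ↥(Set.Ico (0 : ℝ) 2), MeasurableSet A →
      thetaHat α ⁻¹' A = A →
      max (lebHat.restrict {x | (x : ℝ) < 1} A) (lebHat.restrict {x | 1 ≤ (x : ℝ)} A) = 0 ∨
      max (lebHat.restrict {x | (x : ℝ) < 1} Aᶜ) (lebHat.restrict {x | 1 ≤ (x : ℝ)} Aᶜ) = 0 := by
  intro A hA hAinv
  have hemb : MeasurableEmbedding (Subtype.val : OmegaHat → ℝ) :=
    MeasurableEmbedding.subtype_coe measurableSet_Ico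
  have hU1 : MeasurableSet {x : OmegaHat | (x : ℝ) < 1} := measurable_subtype_coe measurableSet_Iio
  have hAcinv : thetaHat α ⁻¹' Aᶜ = Aᶜ := by rw [Set.preimage_compl, hAinv]
  set S : Set ℝ := Subtype.val '' (A ∩ {x : OmegaHat | (x : ℝ) < 1}) with hSdef
  set S' : Set ℝ := Subtype.val '' (Aᶜ ∩ {x : OmegaHat | (x : ℝ) < 1}) with hS'def
  have hSsub : S ⊆ Set.Ico (0:ℝ) 1 := by
    rintro _ ⟨x, ⟨-, hx1⟩, rfl⟩
    exact Set.mem_Ico.mpr ⟨(Set.mem_Ico.mp x.2).1, hx1⟩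
  have hS'sub : S' ⊆ Set.Ico (0:ℝ) 1 := by
    rintro _ ⟨x, ⟨-, hx1⟩, rfl⟩
    exact Set.mem_Ico.mpr ⟨(Set.mem_Ico.mp x.2).1, hx1⟩
  have hSm : MeasurableSet S := hemb.measurableSet_image' (hA.inter hU1)
  have hdiff : Set.Ico (0:ℝ) 1 \ S = S' := by
    ext y
    constructor
    · rintro ⟨hy, hyS⟩
      have hy2 : y ∈ Set.Ico (0:ℝ) 2 :=
        Set.mem_Ico.mpr ⟨(Set.mem_Ico.mp hy).1, by linarith [(Set.mem_Ico.mp hy).2]⟩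
      rw [hS'def, mem_image_val_iff _ y hy2]
      refine ⟨?_, (Set.mem_Ico.mp hy).2⟩
      intro hmem
      apply hyS
      rw [hSdef, mem_image_val_iff _ y hy2]
      exact ⟨hmem, (Set.mem_Ico.mp hy).2⟩
    · intro hy
      have hy1 := hS'sub hy
      refine ⟨hy1, ?_⟩
      intro hyS
      have hy2 : y ∈ Set.Ico (0:ℝ) 2 :=
        Set.mem_Ico.mpr ⟨(Set.mem_Ico.mp hy1).1, by linarith [(Set.mem_Ico.mp hy1).2]⟩
      rw [hSdef, mem_image_val_iff _ y hy2] at hyS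
      rw [hS'def, mem_image_val_iff _ y hy2] at hy
      exact hy.1 hyS.1
  obtain ⟨hA1, hA2⟩ := halves_eq α A hA hAinv
  obtain ⟨hAc1, hAc2⟩ := halves_eq α Aᶜ hA.compl hAcinv
  rcases key_lemma α hα S hSm hSsub (lower_rot_inv α A hAinv) with h | h
  · left
    rw [hA1, hA2, ← hSdef, h]
    simp
  · right
    rw [hAc1, hAc2, ← hS'def, ← hdiff, h]
    simp

end
end

section
/- Let (P_t) be the Markov semigroup of a Markovian cocycle with periodic measure (ρ_s)_{s∈ℝ} of period τ, and define the sublinear expectation T̃[φ] = sup_{s∈[0,τ)} 𝔼_{ρ_s}[φ] on bounded measurable functions on X. Then T̃ is invariant under (P_t): T̃[P_t φ] = T̃[φ] for all t ≥ 0 and bounded measurable φ. -/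
/-!
Fubini for `Measure.bind` turns `𝔼_{ρ_s}[P_t φ]` into `𝔼_{ρ_{s+t}}[φ]`. The function
`s ↦ 𝔼_{ρ_s}[φ]` is `τ`-periodic, so its supremum over `[0, τ)` is its supremum over all of `ℝ`,
and the latter does not see the shift `s ↦ s + t`.
-/

open MeasureTheory ProbabilityTheory

theorem MeasureTheory.Measure.integral_bind {α β E : Type*} [MeasurableSpace α]
    [MeasurableSpace β] [NormedAddCommGroup E] [NormedSpace ℝ E] {μ : Measure α}
    {κ : α → Measure β} (hκ : Measurable κ) {f : β → E} (hf : Integrable f (μ.bind κ)) :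
    ∫ y, f y ∂(μ.bind κ) = ∫ x, ∫ y, f y ∂(κ x) ∂μ := by
  let K : Kernel α β := ⟨κ, hκ⟩
  have hbind : μ.bind κ = (K ∘ₖ Kernel.const Unit μ) () := by
    rw [Kernel.comp_apply, Kernel.const_apply]
    rfl
  rw [hbind] at hf ⊢
  exact Kernel.integral_comp hf

namespace Function.Periodic

variable {α β : Type*} [AddCommGroup α] [LinearOrder α] [IsOrderedAddMonoid α] [Archimedean α]
  {f : α → β} {c : α}

theorem image_Ico_zero (h : Periodic f c) (hc : 0 < c) : f '' Set.Ico 0 c = Set.range f :=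
  (Set.image_subset_range _ _).antisymm <| Set.range_subset_iff.2 fun x =>
    let ⟨y, hy, hyx⟩ := h.exists_mem_Ico₀ hc x
    ⟨y, hy, hyx.symm⟩

theorem iSup_Ico_zero [SupSet β] (h : Periodic f c) (hc : 0 < c) :
    ⨆ s : Set.Ico 0 c, f s = ⨆ s, f s := by
  rw [iSup, iSup, ← h.image_Ico_zero hc, Set.image_eq_range]

end Function.Periodic

theorem sublinear_expectation_invariant_under_markov_semigroup_general
    {X : Type*} [MeasurableSpace X]
    (p : ℝ → X → Measure X)
    (hpmeas : ∀ t, Measurable (p t))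
    (ρ : ℝ → Measure X)
    (hρprob : ∀ s, IsProbabilityMeasure (ρ s))
    (τ : ℝ) (hτ : 0 < τ)
    (hρper : ∀ s : ℝ, ρ (s + τ) = ρ s)
    (hρevolve : ∀ (s t : ℝ), 0 ≤ t → (ρ s).bind (p t) = ρ (s + t))
    (t : ℝ) (ht : 0 ≤ t)
    (φ : X → ℝ) (hφmeas : Measurable φ) (hφbdd : ∃ C : ℝ, ∀ x, |φ x| ≤ C) :
    (⨆ s : Set.Ico (0 : ℝ) τ, ∫ x, (∫ y, φ y ∂(p t x)) ∂(ρ (s : ℝ))) =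
    ⨆ s : Set.Ico (0 : ℝ) τ, ∫ x, φ x ∂(ρ (s : ℝ)) := by
  obtain ⟨C, hC⟩ := hφbdd
  set g : ℝ → ℝ := fun s => ∫ x, φ x ∂(ρ s)
  have hg_periodic : Function.Periodic g τ := fun s => by simp only [g, hρper]
  have hφ_int (s : ℝ) : Integrable φ (ρ s) :=
    .of_bound hφmeas.aestronglyMeasurable C
      (.of_forall fun x => (Real.norm_eq_abs _).trans_le (hC x))
  have hshift (s : ℝ) : ∫ x, (∫ y, φ y ∂(p t x)) ∂(ρ s) = g (s + t) := by
    have hint : Integrable φ ((ρ s).bind (p t)) := hρevolve s t ht ▸ hφ_int (s + t)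
    rw [← Measure.integral_bind (hpmeas t) hint, hρevolve s t ht]
  calc (⨆ s : Set.Ico (0 : ℝ) τ, ∫ x, (∫ y, φ y ∂(p t x)) ∂(ρ (s : ℝ)))
      = ⨆ s : Set.Ico (0 : ℝ) τ, g (s + t) := by simp only [hshift]
    _ = ⨆ s, g (s + t) := (hg_periodic.add_const t).iSup_Ico_zero hτ
    _ = ⨆ s, g s := (Equiv.addRight t).surjective.iSup_comp g
    _ = ⨆ s : Set.Ico (0 : ℝ) τ, g s := (hg_periodic.iSup_Ico_zero hτ).symm

/-- The sublinear expectation `T̃[φ] = sup_{s ∈ [0,τ)} 𝔼_{ρ_s}[φ]` built from a τ-periodic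
measure `(ρ_s)` of a Markov semigroup with transition kernel `p` is invariant under the
semigroup: `T̃[P_t φ] = T̃[φ]` for all `t ≥ 0`, where `(P_t φ)(x) = ∫ φ(y) p(t,x,dy)`. -/
theorem sublinear_expectation_invariant_under_markov_semigroup
    {X : Type*} [TopologicalSpace X] [PolishSpace X] [MeasurableSpace X] [BorelSpace X]
    (p : ℝ → X → Measure X)
    (hpmeas : ∀ t, Measurable (p t))
    (hpprob : ∀ t x, IsProbabilityMeasure (p t x))
    (hp0 : ∀ x, p 0 x = Measure.dirac x)
    (hChapman : ∀ t s : ℝ, 0 ≤ t → 0 ≤ s → ∀ x : X,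
      p (t + s) x = (p s x).bind (p t))
    (ρ : ℝ → Measure X)
    (hρprob : ∀ s, IsProbabilityMeasure (ρ s))
    (τ : ℝ) (hτ : 0 < τ)
    (hρper : ∀ s : ℝ, ρ (s + τ) = ρ s)
    (hρevolve : ∀ (s t : ℝ), 0 ≤ t → (ρ s).bind (p t) = ρ (s + t))
    (t : ℝ) (ht : 0 ≤ t)
    (φ : X → ℝ) (hφmeas : Measurable φ) (hφbdd : ∃ C : ℝ, ∀ x, |φ x| ≤ C) :
    (⨆ s : Set.Ico (0 : ℝ) τ, ∫ x, (∫ y, φ y ∂(p t x)) ∂(ρ (s : ℝ))) =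
    ⨆ s : Set.Ico (0 : ℝ) τ, ∫ x, φ x ∂(ρ (s : ℝ)) :=
  sublinear_expectation_invariant_under_markov_semigroup_general p hpmeas ρ hρprob τ hτ hρper
    hρevolve t ht φ hφmeas hφbdd
end
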